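/- arXiv:2305.17835 — 6 statements merged into one kernel-verified Lean document; each statement's English description precedes it below -/
import Mathlib

section
/- Let N ≥ 1 and let J be the N×N Jacobi matrix of an orthonormal polynomial sequence (p_n) for μ. Then a real number ε is an eigenvalue of J if and only if p_N(ε) = 0; i.e., the eigenvalues of J are exactly the zeros of the polynomial p_N. -/
open MeasureTheory Polynomial Matrix

/-- `p` is the orthonormal polynomial sequence for the measure `μ`:
`p n` has degree `n`, positive leading coefficient, and `∫ pₙ pₘ dμ = δₙₘ`. -/
structure IsOrthonormalPolySeq (μ : Measure ℝ) (p : ℕ → Polynomial ℝ) : Prop where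
  natDegree_eq : ∀ n, (p n).natDegree = n
  leadingCoeff_pos : ∀ n, 0 < (p n).leadingCoeff
  orthonormal : ∀ n m,
    ∫ x, (p n).eval x * (p m).eval x ∂μ = if n = m then (1 : ℝ) else 0

/-- The `N × N` Jacobi matrix of the orthonormal polynomial sequence `p` for `μ`:
diagonal entries `aₙ = ∫ x pₙ(x)² dμ`, off-diagonal entries
`bₙ = ∫ x pₙ(x) pₙ₊₁(x) dμ`, and zero elsewhere. -/
noncomputable def jacobiMatrix (μ : Measure ℝ) (p : ℕ → Polynomial ℝ) (N : ℕ) :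
    Matrix (Fin N) (Fin N) ℝ := fun i j =>
  if (i : ℕ) = (j : ℕ) then ∫ x, x * ((p (i : ℕ)).eval x) ^ 2 ∂μ
  else if (i : ℕ) + 1 = (j : ℕ) then
    ∫ x, x * (p (i : ℕ)).eval x * (p ((i : ℕ) + 1)).eval x ∂μ
  else if (j : ℕ) + 1 = (i : ℕ) then
    ∫ x, x * (p (j : ℕ)).eval x * (p ((j : ℕ) + 1)).eval x ∂μ
  else 0

noncomputable def aJ (μ : Measure ℝ) (p : ℕ → Polynomial ℝ) (n : ℕ) : ℝ :=
  ∫ x, x * ((p n).eval x) ^ 2 ∂μ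

noncomputable def bJ (μ : Measure ℝ) (p : ℕ → Polynomial ℝ) (n : ℕ) : ℝ :=
  ∫ x, x * (p n).eval x * (p (n + 1)).eval x ∂μ

lemma integrable_eval {μ : Measure ℝ}
    (hmom : ∀ k : ℕ, Integrable (fun x : ℝ => x ^ k) μ) (q : Polynomial ℝ) :
    Integrable (fun x => q.eval x) μ := by
  have h : (fun x : ℝ => q.eval x)
      = fun x => ∑ k ∈ Finset.range (q.natDegree + 1), q.coeff k * x ^ k := by
    funext x; exact q.eval_eq_sum_range x
  rw [h]
  exact integrable_finset_sum _ fun k _ => (hmom k).const_mul _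

lemma pne {μ : Measure ℝ} {p : ℕ → Polynomial ℝ} (hp : IsOrthonormalPolySeq μ p) (n : ℕ) :
    p n ≠ 0 :=
  Polynomial.leadingCoeff_ne_zero.mp (hp.leadingCoeff_pos n).ne'

lemma integral_comb {μ : Measure ℝ} {p : ℕ → Polynomial ℝ}
    (hmom : ∀ k : ℕ, Integrable (fun x : ℝ => x ^ k) μ)
    (hp : IsOrthonormalPolySeq μ p) (c : ℕ → ℝ) (M j : ℕ) :
    ∫ x, (∑ k ∈ Finset.range M, Polynomial.C (c k) * p k).eval x * (p j).eval x ∂μ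
      = if j < M then c j else 0 := by
  have h : (fun x : ℝ => (∑ k ∈ Finset.range M, Polynomial.C (c k) * p k).eval x * (p j).eval x)
      = fun x => ∑ k ∈ Finset.range M, c k * ((p k * p j).eval x) := by
    funext x
    rw [Polynomial.eval_finset_sum, Finset.sum_mul]
    exact Finset.sum_congr rfl fun k _ => by simp [Polynomial.eval_mul]; ring
  rw [h, integral_finset_sum _ fun k _ => ((integrable_eval hmom (p k * p j)).const_mul _)]
  have h2 : ∀ k, (∫ x, c k * ((p k * p j).eval x) ∂μ) = if k = j then c k else 0 := by
    intro k
    rw [MeasureTheory.integral_const_mul]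
    have h3 : (∫ x, (p k * p j).eval x ∂μ) = if k = j then (1:ℝ) else 0 := by
      rw [← hp.orthonormal k j]
      simp [Polynomial.eval_mul]
    rw [h3]
    split_ifs <;> simp
  rw [Finset.sum_congr rfl fun k _ => h2 k, Finset.sum_ite_eq' (Finset.range M) j c]
  simp [Finset.mem_range]

lemma exists_comb {μ : Measure ℝ} {p : ℕ → Polynomial ℝ}
    (hp : IsOrthonormalPolySeq μ p) :
    ∀ m, ∀ q : Polynomial ℝ, q.natDegree ≤ m →
      ∃ c : ℕ → ℝ, q = ∑ k ∈ Finset.range (m + 1), Polynomial.C (c k) * p k := by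
  intro m
  induction m with
  | zero =>
    intro q hq
    obtain ⟨s, hs, hp0⟩ : ∃ s : ℝ, s ≠ 0 ∧ p 0 = Polynomial.C s := by
      refine ⟨(p 0).leadingCoeff, (hp.leadingCoeff_pos 0).ne', ?_⟩
      conv_lhs => rw [Polynomial.eq_C_of_natDegree_le_zero (le_of_eq (hp.natDegree_eq 0))]
      rw [Polynomial.leadingCoeff, hp.natDegree_eq 0]
    refine ⟨fun _ => q.coeff 0 / s, ?_⟩
    rw [Finset.sum_range_one, hp0, ← Polynomial.C_mul, div_mul_cancel₀ _ hs]
    exact Polynomial.eq_C_of_natDegree_le_zero hq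
  | succ m IH =>
    intro q hq
    set γ := q.coeff (m + 1) / (p (m + 1)).leadingCoeff with hγ
    have hlc : (p (m + 1)).coeff (m + 1) = (p (m + 1)).leadingCoeff := by
      rw [Polynomial.leadingCoeff, hp.natDegree_eq]
    have hr : (q - Polynomial.C γ * p (m + 1)).natDegree ≤ m := by
      rw [Polynomial.natDegree_le_iff_coeff_eq_zero]
      intro k hk
      rcases eq_or_lt_of_le (Nat.succ_le_of_lt hk) with h | h
      · have hcan : γ * (p (m + 1)).leadingCoeff = q.coeff (m + 1) :=
          div_mul_cancel₀ _ (hp.leadingCoeff_pos (m + 1)).ne'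
        simp only [Polynomial.coeff_sub, Polynomial.coeff_C_mul, ← h, hlc, hcan, sub_self]
      · have h1 : q.coeff k = 0 :=
          Polynomial.coeff_eq_zero_of_natDegree_lt (lt_of_le_of_lt hq h)
        have h2 : (Polynomial.C γ * p (m + 1)).natDegree < k :=
          lt_of_le_of_lt (le_trans (Polynomial.natDegree_C_mul_le _ _)
            (le_of_eq (hp.natDegree_eq _))) h
        simp [h1, Polynomial.coeff_eq_zero_of_natDegree_lt h2]
    obtain ⟨c, hc⟩ := IH _ hr
    refine ⟨fun k => if k = m + 1 then γ else c k, ?_⟩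
    rw [Finset.sum_range_succ]
    have : ∑ k ∈ Finset.range (m + 1),
        Polynomial.C (if k = m + 1 then γ else c k) * p k
        = ∑ k ∈ Finset.range (m + 1), Polynomial.C (c k) * p k := by
      refine Finset.sum_congr rfl fun k hk => ?_
      rw [if_neg (by simp at hk; omega)]
    rw [this, ← hc]
    simp

lemma recurrence {μ : Measure ℝ} {p : ℕ → Polynomial ℝ}
    (hmom : ∀ k : ℕ, Integrable (fun x : ℝ => x ^ k) μ)
    (hp : IsOrthonormalPolySeq μ p) (n : ℕ) :
    Polynomial.X * p n
      = (if n = 0 then 0 else Polynomial.C (bJ μ p (n - 1)) * p (n - 1))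
        + Polynomial.C (aJ μ p n) * p n + Polynomial.C (bJ μ p n) * p (n + 1) := by
  have hdeg : ∀ r : ℕ, (Polynomial.X * p r).natDegree ≤ r + 1 := by
    intro r
    rw [Polynomial.natDegree_mul Polynomial.X_ne_zero (pne hp r),
      Polynomial.natDegree_X, hp.natDegree_eq]
    omega
  obtain ⟨c, hc⟩ := exists_comb hp (n + 1) (Polynomial.X * p n) (hdeg n)
  have hck : ∀ k, k < n + 2 → c k = ∫ x, x * (p n).eval x * (p k).eval x ∂μ := by
    intro k hk
    have h1 := integral_comb hmom hp c (n + 2) k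
    rw [← hc, if_pos hk] at h1
    rw [← h1]
    congr 1
    funext x
    simp [Polynomial.eval_mul]
  have hvanish : ∀ k, k + 1 < n → c k = 0 := by
    intro k hk
    obtain ⟨d, hd⟩ := exists_comb hp (k + 1) (Polynomial.X * p k) (hdeg k)
    have h1 : c k = ∫ x, (Polynomial.X * p k).eval x * (p n).eval x ∂μ := by
      rw [hck k (by omega)]
      congr 1
      funext x
      simp [Polynomial.eval_mul]
      ring
    rw [hd, integral_comb hmom hp d (k + 2) n, if_neg (by omega)] at h1
    exact h1
  rw [Finset.sum_range_succ, Finset.sum_range_succ] at hc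
  have hcn : c n = aJ μ p n := by
    rw [hck n (by omega), aJ]
    congr 1
    funext x
    ring
  have hcn1 : c (n + 1) = bJ μ p n := (hck (n + 1) (by omega)).trans rfl
  have hlow : ∑ k ∈ Finset.range n, Polynomial.C (c k) * p k
      = if n = 0 then 0 else Polynomial.C (bJ μ p (n - 1)) * p (n - 1) := by
    cases n with
    | zero => simp
    | succ m =>
      rw [if_neg (Nat.succ_ne_zero m), Finset.sum_range_succ]
      have hz : ∑ k ∈ Finset.range m, Polynomial.C (c k) * p k = 0 :=
        Finset.sum_eq_zero fun k hk => by
          rw [hvanish k (by simp at hk; omega)]; simp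
      have hcm : c m = bJ μ p m := by
        rw [hck m (by omega), bJ]
        congr 1
        funext x
        ring
      simp [hz, hcm]
  rw [hc, hcn, hcn1, hlow]

lemma bJ_pos {μ : Measure ℝ} {p : ℕ → Polynomial ℝ}
    (hmom : ∀ k : ℕ, Integrable (fun x : ℝ => x ^ k) μ)
    (hp : IsOrthonormalPolySeq μ p) (n : ℕ) : 0 < bJ μ p n := by
  have h := congrArg (fun q : Polynomial ℝ => q.coeff (n + 1)) (recurrence hmom hp n)
  simp only [Polynomial.coeff_X_mul, Polynomial.coeff_add, Polynomial.coeff_C_mul,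
    apply_ite (fun q : Polynomial ℝ => q.coeff (n + 1)), Polynomial.coeff_zero] at h
  have h1 : (p n).coeff (n + 1) = 0 :=
    Polynomial.coeff_eq_zero_of_natDegree_lt (by rw [hp.natDegree_eq]; omega)
  have h2 : (p (n - 1)).coeff (n + 1) = 0 :=
    Polynomial.coeff_eq_zero_of_natDegree_lt (by rw [hp.natDegree_eq]; omega)
  have h3 : (p (n + 1)).coeff (n + 1) = (p (n + 1)).leadingCoeff := by
    rw [Polynomial.leadingCoeff, hp.natDegree_eq]
  have h4 : (p n).coeff n = (p n).leadingCoeff := by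
    rw [Polynomial.leadingCoeff, hp.natDegree_eq]
  rw [h1, h2, h3, h4] at h
  simp only [mul_zero, ite_self, zero_add, add_zero] at h
  have hpos := hp.leadingCoeff_pos n
  rw [h] at hpos
  nlinarith [hpos, hp.leadingCoeff_pos (n + 1)]

lemma jacobi_apply (μ : Measure ℝ) (p : ℕ → Polynomial ℝ) {N : ℕ} (i j : Fin N) :
    jacobiMatrix μ p N i j
      = (if (i : ℕ) = (j : ℕ) then aJ μ p i else 0)
        + (if (i : ℕ) + 1 = (j : ℕ) then bJ μ p i else 0)
        + (if (j : ℕ) + 1 = (i : ℕ) then bJ μ p j else 0) := by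
  unfold jacobiMatrix aJ bJ
  split_ifs <;> first | ring1 | (exfalso; omega)

def extv {N : ℕ} (v : Fin N → ℝ) : ℕ → ℝ := fun k => if h : k < N then v ⟨k, h⟩ else 0

lemma extv_fin {N : ℕ} (v : Fin N → ℝ) (j : Fin N) : extv v (j : ℕ) = v j := by
  simp [extv]

lemma mulVec_row (μ : Measure ℝ) (p : ℕ → Polynomial ℝ) {N : ℕ} (v : Fin N → ℝ) (i : Fin N) :
    (jacobiMatrix μ p N).mulVec v i
      = (if (i : ℕ) = 0 then 0 else bJ μ p ((i : ℕ) - 1) * extv v ((i : ℕ) - 1))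
        + aJ μ p (i : ℕ) * extv v (i : ℕ) + bJ μ p (i : ℕ) * extv v ((i : ℕ) + 1) := by
  have key : (jacobiMatrix μ p N).mulVec v i
      = ∑ k ∈ Finset.range N,
          ((if (i : ℕ) = k then aJ μ p (i : ℕ) else 0)
            + (if (i : ℕ) + 1 = k then bJ μ p (i : ℕ) else 0)
            + (if k + 1 = (i : ℕ) then bJ μ p k else 0)) * extv v k := by
    rw [← Fin.sum_univ_eq_sum_range]
    simp only [Matrix.mulVec, dotProduct]
    exact Finset.sum_congr rfl fun j _ => by rw [jacobi_apply, extv_fin]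
  rw [key]
  simp only [add_mul, ite_mul, zero_mul]
  rw [Finset.sum_add_distrib, Finset.sum_add_distrib, Finset.sum_ite_eq, Finset.sum_ite_eq]
  have hS1 : (if (i : ℕ) ∈ Finset.range N then aJ μ p (i : ℕ) * extv v (i : ℕ) else 0)
      = aJ μ p (i : ℕ) * extv v (i : ℕ) := by
    rw [if_pos (Finset.mem_range.mpr i.isLt)]
  have hS2 : (if (i : ℕ) + 1 ∈ Finset.range N then bJ μ p (i : ℕ) * extv v ((i : ℕ) + 1) else 0)
      = bJ μ p (i : ℕ) * extv v ((i : ℕ) + 1) := by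
    by_cases h : (i : ℕ) + 1 < N
    · rw [if_pos (Finset.mem_range.mpr h)]
    · rw [if_neg (by simp [Finset.mem_range]; omega)]
      rw [extv, dif_neg h, mul_zero]
  have hS3 : (∑ k ∈ Finset.range N, if k + 1 = (i : ℕ) then bJ μ p k * extv v k else 0)
      = (if (i : ℕ) = 0 then 0 else bJ μ p ((i : ℕ) - 1) * extv v ((i : ℕ) - 1)) := by
    rcases hm : (i : ℕ) with _ | t
    · simp
    · rw [if_neg (Nat.succ_ne_zero t)]
      have hcong : ∀ k ∈ Finset.range N,
          (if k + 1 = t + 1 then bJ μ p k * extv v k else 0)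
            = (if t = k then bJ μ p k * extv v k else 0) := by
        intro k _
        exact if_congr (by omega) rfl rfl
      rw [Finset.sum_congr rfl hcong, Finset.sum_ite_eq,
        if_pos (Finset.mem_range.mpr (by have := i.isLt; omega))]
      simp
  rw [hS1, hS2, hS3]
  ring

lemma recurrence_eval {μ : Measure ℝ} {p : ℕ → Polynomial ℝ}
    (hmom : ∀ k : ℕ, Integrable (fun x : ℝ => x ^ k) μ)
    (hp : IsOrthonormalPolySeq μ p) (n : ℕ) (x : ℝ) :
    x * (p n).eval x
      = (if n = 0 then 0 else bJ μ p (n - 1) * (p (n - 1)).eval x)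
        + aJ μ p n * (p n).eval x + bJ μ p n * (p (n + 1)).eval x := by
  have h := congrArg (Polynomial.eval x) (recurrence hmom hp n)
  simpa [apply_ite (Polynomial.eval x)] using h

lemma p0_eval {μ : Measure ℝ} {p : ℕ → Polynomial ℝ}
    (hp : IsOrthonormalPolySeq μ p) (x : ℝ) : (p 0).eval x = (p 0).leadingCoeff := by
  conv_lhs => rw [Polynomial.eq_C_of_natDegree_le_zero (le_of_eq (hp.natDegree_eq 0))]
  rw [Polynomial.eval_C, Polynomial.leadingCoeff, hp.natDegree_eq 0]


/-- For `N ≥ 1`, a real number `ε` is an eigenvalue of the `N × N`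
Jacobi matrix `J` of the orthonormal polynomial sequence `(pₙ)` for `μ`
(a positive Borel measure with finite moments of all orders and infinite support)
if and only if `p_N(ε) = 0`. -/
theorem jacobi_eigenvalue_iff_root
    (μ : Measure ℝ) (p : ℕ → Polynomial ℝ)
    (hmom : ∀ k : ℕ, Integrable (fun x : ℝ => x ^ k) μ)
    (hsupp : ∀ s : Finset ℝ, μ ((s : Set ℝ))ᶜ ≠ 0)
    (hp : IsOrthonormalPolySeq μ p)
    (N : ℕ) (hN : 1 ≤ N) (ε : ℝ) :
    Module.End.HasEigenvalue ((jacobiMatrix μ p N).mulVecLin) ε ↔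
      (p N).eval ε = 0 := by
  have hs : (p 0).eval ε ≠ 0 := by rw [p0_eval hp]; exact (hp.leadingCoeff_pos 0).ne'
  constructor
  · intro hev
    obtain ⟨v, hv⟩ := hev.exists_hasEigenvector
    have hmv : (jacobiMatrix μ p N).mulVec v = ε • v := by
      have := hv.apply_eq_smul
      rwa [Matrix.mulVecLin_apply] at this
    set c : ℝ := v ⟨0, hN⟩ / (p 0).eval ε with hcdef
    have H : ∀ k, k < N → extv v k = c * (p k).eval ε := by
      intro k
      induction k using Nat.strong_induction_on with
      | _ k IH =>
        intro hkN
        rcases k with _ | j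
        · rw [extv, dif_pos hkN, hcdef]
          field_simp
        · have hjN : j < N := by omega
          have hrow := congrFun hmv ⟨j, hjN⟩
          rw [mulVec_row] at hrow
          simp only [Fin.val_mk, Pi.smul_apply, smul_eq_mul] at hrow
          rw [← extv_fin v ⟨j, hjN⟩] at hrow
          simp only [Fin.val_mk] at hrow
          have h1 : extv v j = c * (p j).eval ε := IH j (by omega) hjN
          have h2 : (if j = 0 then 0 else bJ μ p (j - 1) * extv v (j - 1))
              = c * (if j = 0 then 0 else bJ μ p (j - 1) * (p (j - 1)).eval ε) := by
            rcases j with _ | t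
            · simp
            · simp only [if_neg (Nat.succ_ne_zero t), Nat.succ_sub_one]
              rw [IH t (by omega) (by omega)]
              ring
          have hrec := recurrence_eval hmom hp j ε
          have hrec' : c * (ε * (p j).eval ε)
              = c * ((if j = 0 then 0 else bJ μ p (j - 1) * (p (j - 1)).eval ε)
                + aJ μ p j * (p j).eval ε + bJ μ p j * (p (j + 1)).eval ε) := by
            rw [← hrec]
          have h3 : bJ μ p j * extv v (j + 1) = bJ μ p j * (c * (p (j + 1)).eval ε) := by
            rw [h1, h2] at hrow
            linear_combination hrow + hrec'
          exact mul_left_cancel₀ (bJ_pos hmom hp j).ne' h3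
    have hc : c ≠ 0 := by
      intro h0
      apply hv.2
      funext i
      have := H (i : ℕ) i.isLt
      rw [extv_fin, h0, zero_mul] at this
      simpa using this
    have hm : N - 1 < N := by omega
    have hrow := congrFun hmv ⟨N - 1, hm⟩
    rw [mulVec_row] at hrow
    simp only [Fin.val_mk, Pi.smul_apply, smul_eq_mul] at hrow
    rw [← extv_fin v ⟨N - 1, hm⟩] at hrow
    simp only [Fin.val_mk] at hrow
    have hNsub : (N - 1) + 1 = N := by omega
    have hz : extv v ((N - 1) + 1) = 0 := by rw [hNsub, extv, dif_neg (lt_irrefl N)]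
    have h1 : extv v (N - 1) = c * (p (N - 1)).eval ε := H (N - 1) hm
    have h2 : (if N - 1 = 0 then 0 else bJ μ p (N - 1 - 1) * extv v (N - 1 - 1))
        = c * (if N - 1 = 0 then 0 else bJ μ p (N - 1 - 1) * (p (N - 1 - 1)).eval ε) := by
      rcases hq : N - 1 with _ | t
      · simp
      · simp only [if_neg (Nat.succ_ne_zero t), Nat.succ_sub_one]
        rw [H t (by omega)]
        ring
    have hrec := recurrence_eval hmom hp (N - 1) ε
    rw [hNsub] at hrec
    have hkey : c * (bJ μ p (N - 1) * (p N).eval ε) = 0 := by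
      rw [h1, h2, hz] at hrow
      linear_combination -hrow - c * hrec
    rcases mul_eq_zero.mp hkey with h | h
    · exact absurd h hc
    · rcases mul_eq_zero.mp h with h' | h'
      · exact absurd h' (bJ_pos hmom hp (N - 1)).ne'
      · exact h'
  · intro hroot
    set v : Fin N → ℝ := fun i => (p (i : ℕ)).eval ε with hvdef
    have hext : ∀ k, k ≤ N → extv v k = (p k).eval ε := by
      intro k hk
      by_cases h : k < N
      · rw [extv, dif_pos h]
      · have hkN : k = N := by omega
        rw [extv, dif_neg h, hkN, hroot]
    refine Module.End.hasEigenvalue_of_hasEigenvector (x := v)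
      ⟨Module.End.mem_eigenspace_iff.mpr ?_, ?_⟩
    · rw [Matrix.mulVecLin_apply]
      funext i
      rw [mulVec_row]
      have hi := i.isLt
      have e1 : extv v ((i : ℕ) + 1) = (p ((i : ℕ) + 1)).eval ε := hext _ (by omega)
      have e2 : extv v (i : ℕ) = (p (i : ℕ)).eval ε := hext _ (by omega)
      have e3 : (if (i : ℕ) = 0 then 0 else bJ μ p ((i : ℕ) - 1) * extv v ((i : ℕ) - 1))
          = (if (i : ℕ) = 0 then 0 else bJ μ p ((i : ℕ) - 1) * (p ((i : ℕ) - 1)).eval ε) := by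
        rcases h : (i : ℕ) with _ | t
        · rfl
        · simp only [if_neg (Nat.succ_ne_zero t), Nat.succ_sub_one, hext t (by omega)]
      rw [e1, e2, e3, ← recurrence_eval hmom hp (i : ℕ) ε]
      simp [hvdef]
    · intro h0
      have := congrFun h0 ⟨0, hN⟩
      simp only [hvdef, Fin.val_mk, Pi.zero_apply] at this
      exact hs this
end

section
/- (Weight formula in terms of eigenvalues.) Let N ≥ 2, let J be an N×N real symmetric tridiagonal matrix with nonzero off-diagonal entries, let ε_0 < ε_1 < … < ε_{N−1} be its eigenvalues, let Λ_{·,n} be a unit eigenvector of J for ε_n, and let ε̂_0 < … < ε̂_{N−2} be the eigenvalues of the (N−1)×(N−1) submatrix of J obtained by deleting its first row and first column. Then for every 0 ≤ n ≤ N−1, Λ_{0,n}² = ∏_{m=0}^{N−2} (ε_n − ε̂_m) / ∏_{k=0, k≠n}^{N−1} (ε_n − ε_k). -/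
open Matrix

namespace TridiagWeightAux

open Polynomial

/-- The `(0,0)` entry of the adjugate is the determinant of the minor obtained by
deleting the first row and column. -/
lemma adjugate_zero_zero {n : ℕ} (M : Matrix (Fin (n+1)) (Fin (n+1)) ℝ) :
    adjugate M 0 0 = det (M.submatrix Fin.succ Fin.succ) := by
  rw [adjugate_apply, det_succ_row_zero]
  rw [Finset.sum_eq_single 0]
  · simp only [Fin.val_zero, pow_zero, one_mul, updateRow_self, Pi.single_eq_same,
      Fin.succAbove_zero]
    have : (M.updateRow 0 (Pi.single 0 1)).submatrix Fin.succ Fin.succ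
        = M.submatrix Fin.succ Fin.succ := by
      ext i j
      simp [updateRow_ne (Fin.succ_ne_zero i)]
    rw [this]
  · intro j _ hj
    simp [updateRow_self, Pi.single_eq_of_ne hj]
  · simp

/-- Evaluating the characteristic polynomial. -/
lemma eval_charpoly' {n : ℕ} (M : Matrix (Fin n) (Fin n) ℝ) (x : ℝ) :
    M.charpoly.eval x = det (x • (1 : Matrix (Fin n) (Fin n) ℝ) - M) := by
  rw [Matrix.charpoly, ← coe_evalRingHom, RingHom.map_det]
  congr 1
  ext i j
  by_cases h : i = j <;>
    simp [charmatrix_apply, Matrix.diagonal, Matrix.one_apply, h, Matrix.map_apply]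

/-- A real matrix whose characteristic polynomial has `n` distinct roots has its
characteristic polynomial equal to the product of the corresponding linear factors. -/
lemma charpoly_eq_prod {n : ℕ} (M : Matrix (Fin n) (Fin n) ℝ) (e : Fin n → ℝ)
    (hinj : Function.Injective e) (hroot : ∀ m, M.charpoly.IsRoot (e m)) :
    M.charpoly = ∏ m : Fin n, (X - C (e m)) := by
  have hmono : M.charpoly.Monic := M.charpoly_monic
  have hne : M.charpoly ≠ 0 := hmono.ne_zero
  set s : Multiset ℝ := Finset.univ.val.map e with hs
  have hnodup : s.Nodup := Multiset.Nodup.map hinj Finset.univ.nodup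
  have hle : s ≤ M.charpoly.roots := by
    rw [Multiset.le_iff_count]
    intro a
    by_cases ha : a ∈ s
    · have h1 : Multiset.count a s = 1 := Multiset.count_eq_one_of_mem hnodup ha
      obtain ⟨m, _, rfl⟩ := Multiset.mem_map.mp ha
      rw [h1, Multiset.one_le_count_iff_mem]
      exact (Polynomial.mem_roots hne).mpr (hroot m)
    · simp [Multiset.count_eq_zero_of_notMem ha]
  have hdvd : (∏ m : Fin n, (X - C (e m))) ∣ M.charpoly := by
    have := (Multiset.prod_X_sub_C_dvd_iff_le_roots hne s).mpr hle
    rwa [hs, Multiset.map_map, Finset.prod_map_val] at this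
  have hQmonic : (∏ m : Fin n, (X - C (e m))).Monic :=
    monic_prod_of_monic _ _ (fun m _ => monic_X_sub_C (e m))
  refine eq_of_monic_of_dvd_of_natDegree_le hQmonic hmono hdvd ?_
  rw [M.charpoly_natDegree_eq_dim, Fintype.card_fin]
  rw [natDegree_prod _ _ (fun m _ => X_sub_C_ne_zero (e m))]
  simp [natDegree_X_sub_C]

end TridiagWeightAux

open TridiagWeightAux Polynomial

/-- **weight formula in terms of eigenvalues.** Let `J` be an
`(N+1) × (N+1)` (with `N ≥ 1`, so the size is at least `2`) real symmetric
tridiagonal matrix with nonzero off-diagonal entries, let `ε 0 < … < ε N` be its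
eigenvalues with corresponding unit eigenvectors `Λ · n`, and let
`ε̂ 0 < … < ε̂ (N-1)` be the eigenvalues of the `N × N` submatrix of `J` obtained by
deleting its first row and column. Then for every `n`,
`(Λ 0 n)² = ∏ₘ (εₙ − ε̂ₘ) / ∏_{k ≠ n} (εₙ − ε_k)`. -/
theorem tridiagonal_weight_formula
    (N : ℕ) (hN : 1 ≤ N) (J : Matrix (Fin (N + 1)) (Fin (N + 1)) ℝ)
    (hsym : J.IsSymm)
    (htri : ∀ i j : Fin (N + 1), (i : ℕ) + 2 ≤ (j : ℕ) → J i j = 0)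
    (hoff : ∀ i j : Fin (N + 1), (i : ℕ) + 1 = (j : ℕ) → J i j ≠ 0)
    (ε : Fin (N + 1) → ℝ) (hmono : StrictMono ε)
    (Λ : Fin (N + 1) → Fin (N + 1) → ℝ)
    (hEigen : ∀ n : Fin (N + 1),
      J.mulVec (fun i => Λ i n) = ε n • (fun i => Λ i n))
    (hUnit : ∀ n : Fin (N + 1), ∑ i : Fin (N + 1), (Λ i n) ^ 2 = 1)
    (ε' : Fin N → ℝ) (hmono' : StrictMono ε')
    (hε'eig : ∀ i, Module.End.HasEigenvalue
      (J.submatrix Fin.succ Fin.succ).mulVecLin (ε' i))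
    (hε'all : ∀ t : ℝ, Module.End.HasEigenvalue
      (J.submatrix Fin.succ Fin.succ).mulVecLin t → ∃ i, t = ε' i) :
    ∀ n : Fin (N + 1), (Λ 0 n) ^ 2 =
      (∏ m : Fin N, (ε n - ε' m)) /
        ∏ k ∈ Finset.univ.erase n, (ε n - ε k) := by
  -- basic symmetry / eigenvalue facts
  have hJsym : ∀ i j, J j i = J i j := by
    intro i j
    conv_rhs => rw [← hsym]
    rfl
  have hEigen' : ∀ (k : Fin (N+1)) (i : Fin (N+1)),
      ∑ j, J i j * Λ j k = ε k * Λ i k := by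
    intro k i
    have := congrFun (hEigen k) i
    simpa [Matrix.mulVec, dotProduct] using this
  -- orthogonality of eigenvectors
  have horth : ∀ k l, k ≠ l → ∑ i, Λ i k * Λ i l = 0 := by
    intro k l hkl
    have h1 : ∑ i, (∑ j, J i j * Λ j k) * Λ i l = ε k * ∑ i, Λ i k * Λ i l := by
      rw [Finset.mul_sum]
      exact Finset.sum_congr rfl fun i _ => by rw [hEigen' k i]; ring
    have h2 : ∑ i, (∑ j, J i j * Λ j k) * Λ i l = ε l * ∑ i, Λ i k * Λ i l := by
      rw [Finset.mul_sum]
      have swap : ∑ i, (∑ j, J i j * Λ j k) * Λ i l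
          = ∑ j, (∑ i, J j i * Λ i l) * Λ j k := by
        simp_rw [Finset.sum_mul]
        rw [Finset.sum_comm]
        exact Finset.sum_congr rfl fun j _ => Finset.sum_congr rfl fun i _ => by
          rw [hJsym j i]; ring
      rw [swap]
      exact Finset.sum_congr rfl fun j _ => by rw [hEigen' l j]; ring
    have h3 : (ε k - ε l) * ∑ i, Λ i k * Λ i l = 0 := by
      rw [sub_mul, h1.symm.trans h2]; ring
    have hne : ε k - ε l ≠ 0 := sub_ne_zero.mpr (fun h => hkl (hmono.injective h))
    exact (mul_eq_zero.mp h3).resolve_left hne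
  -- the eigenvector matrix is orthogonal
  set U : Matrix (Fin (N+1)) (Fin (N+1)) ℝ := Matrix.of Λ with hU
  have hUtU : Uᵀ * U = 1 := by
    ext k l
    simp only [Matrix.mul_apply, Matrix.transpose_apply, Matrix.one_apply, hU, Matrix.of_apply]
    by_cases h : k = l
    · subst h; simpa [sq] using hUnit k
    · simp [h, horth k l h]
  have hUUt : U * Uᵀ = 1 := mul_eq_one_comm.mp hUtU
  have hcomp : ∀ i j, ∑ k, Λ i k * Λ j k = if i = j then (1:ℝ) else 0 := by
    intro i j
    have := congrFun (congrFun hUUt i) j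
    simpa [Matrix.mul_apply, Matrix.transpose_apply, hU, Matrix.one_apply] using this
  -- determinant of x•1 - J
  have hJU : J * U = U * Matrix.diagonal ε := by
    ext i k
    rw [Matrix.mul_diagonal]
    simp only [Matrix.mul_apply, hU, Matrix.of_apply]
    rw [hEigen' k i]; ring
  have hJeq : J = U * Matrix.diagonal ε * Uᵀ := by
    calc J = J * (U * Uᵀ) := by rw [hUUt, Matrix.mul_one]
    _ = (J * U) * Uᵀ := by rw [Matrix.mul_assoc]
    _ = U * Matrix.diagonal ε * Uᵀ := by rw [hJU]
  have hdetU : det U * det U = 1 := by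
    have := congrArg Matrix.det hUUt
    rwa [Matrix.det_mul, Matrix.det_transpose, Matrix.det_one] at this
  have hdet : ∀ x : ℝ, det (x • (1 : Matrix (Fin (N+1)) (Fin (N+1)) ℝ) - J)
      = ∏ k, (x - ε k) := by
    intro x
    have hfact : x • (1 : Matrix (Fin (N+1)) (Fin (N+1)) ℝ) - J
        = U * Matrix.diagonal (fun k => x - ε k) * Uᵀ := by
      have h1 : Matrix.diagonal (fun k : Fin (N+1) => x - ε k)
          = x • (1 : Matrix (Fin (N+1)) (Fin (N+1)) ℝ) - Matrix.diagonal ε := by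
        ext i j
        by_cases h : i = j <;> simp [Matrix.diagonal, h, Matrix.one_apply]
      rw [h1, Matrix.mul_sub, Matrix.sub_mul, ← hJeq]
      congr 1
      rw [Matrix.mul_smul, Matrix.mul_one, Matrix.smul_mul, hUUt]
    rw [hfact, Matrix.det_mul, Matrix.det_mul, Matrix.det_transpose, Matrix.det_diagonal]
    rw [mul_right_comm, hdetU, one_mul]
  -- the candidate adjugate matrix
  set A : ℝ → Matrix (Fin (N+1)) (Fin (N+1)) ℝ := fun x => Matrix.of fun i j =>
    ∑ k, (∏ j' ∈ Finset.univ.erase k, (x - ε j')) * (Λ i k * Λ j k) with hA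
  have hMA : ∀ x : ℝ, (x • (1 : Matrix (Fin (N+1)) (Fin (N+1)) ℝ) - J) * A x
      = (∏ k, (x - ε k)) • (1 : Matrix (Fin (N+1)) (Fin (N+1)) ℝ) := by
    intro x
    ext i j
    simp only [Matrix.mul_apply, hA, Matrix.of_apply, Matrix.smul_apply, Matrix.sub_apply,
      Matrix.one_apply, smul_eq_mul]
    calc ∑ l, ((x * if i = l then (1:ℝ) else 0) - J i l) *
          ∑ k, (∏ j' ∈ Finset.univ.erase k, (x - ε j')) * (Λ l k * Λ j k)
        = ∑ l, ∑ k, ((x * if i = l then (1:ℝ) else 0) - J i l) *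
            ((∏ j' ∈ Finset.univ.erase k, (x - ε j')) * (Λ l k * Λ j k)) := by
          exact Finset.sum_congr rfl fun l _ => Finset.mul_sum _ _ _
      _ = ∑ k, ∑ l, ((x * if i = l then (1:ℝ) else 0) - J i l) *
            ((∏ j' ∈ Finset.univ.erase k, (x - ε j')) * (Λ l k * Λ j k)) :=
          Finset.sum_comm
      _ = ∑ k, (∏ j' ∈ Finset.univ.erase k, (x - ε j')) * ((x - ε k) * (Λ i k * Λ j k)) := by
          refine Finset.sum_congr rfl fun k _ => ?_
          simp_rw [sub_mul]
          rw [Finset.sum_sub_distrib]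
          have e1 : ∑ l, (x * if i = l then (1:ℝ) else 0) *
              ((∏ j' ∈ Finset.univ.erase k, (x - ε j')) * (Λ l k * Λ j k))
              = x * ((∏ j' ∈ Finset.univ.erase k, (x - ε j')) * (Λ i k * Λ j k)) := by
            rw [Finset.sum_eq_single i]
            · simp
            · intro b _ hb; simp [Ne.symm hb]
            · simp
          have e2 : ∑ l, J i l *
              ((∏ j' ∈ Finset.univ.erase k, (x - ε j')) * (Λ l k * Λ j k))
              = ((∏ j' ∈ Finset.univ.erase k, (x - ε j')) * Λ j k) * ∑ l, J i l * Λ l k := by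
            rw [Finset.mul_sum]
            exact Finset.sum_congr rfl fun l _ => by ring
          rw [e1, e2, hEigen' k i]
          ring
      _ = ∑ k, (∏ j', (x - ε j')) * (Λ i k * Λ j k) := by
          refine Finset.sum_congr rfl fun k _ => ?_
          rw [← mul_assoc, Finset.prod_erase_mul _ _ (Finset.mem_univ k)]
      _ = (∏ j', (x - ε j')) * if i = j then (1:ℝ) else 0 := by
          rw [← Finset.mul_sum, hcomp i j]
  -- for x outside the spectrum, A x is the adjugate
  have hAadj : ∀ x : ℝ, x ∉ Set.range ε →
      A x = adjugate (x • (1 : Matrix (Fin (N+1)) (Fin (N+1)) ℝ) - J) := by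
    intro x hx
    set M := x • (1 : Matrix (Fin (N+1)) (Fin (N+1)) ℝ) - J with hM
    have hdM : M.det ≠ 0 := by
      rw [hM, hdet]
      exact Finset.prod_ne_zero_iff.mpr
        (fun k _ => sub_ne_zero.mpr (fun h => hx ⟨k, h.symm⟩))
    have hinv : Invertible M := M.invertibleOfIsUnitDet (isUnit_iff_ne_zero.mpr hdM)
    have h1 : M * A x = M * adjugate M := by
      rw [Matrix.mul_adjugate, hM, hMA x, hdet]
    calc A x = ⅟M * (M * A x) := by rw [← Matrix.mul_assoc, invOf_mul_self, Matrix.one_mul]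
    _ = ⅟M * (M * adjugate M) := by rw [h1]
    _ = adjugate M := by rw [← Matrix.mul_assoc, invOf_mul_self, Matrix.one_mul]
  -- the submatrix and its characteristic polynomial
  set J' : Matrix (Fin N) (Fin N) ℝ := J.submatrix Fin.succ Fin.succ with hJ'
  have hsub : ∀ x : ℝ,
      (x • (1 : Matrix (Fin (N+1)) (Fin (N+1)) ℝ) - J).submatrix Fin.succ Fin.succ
      = x • (1 : Matrix (Fin N) (Fin N) ℝ) - J' := by
    intro x
    ext i j
    simp [Matrix.one_apply, Fin.succ_inj, hJ']
  have hroot : ∀ m, J'.charpoly.IsRoot (ε' m) := by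
    intro m
    obtain ⟨v, hv⟩ := (hε'eig m).exists_hasEigenvector
    have hv1 : J'.mulVec v = ε' m • v := by
      have := hv.apply_eq_smul
      simpa [Matrix.mulVecLin_apply] using this
    have hker : (ε' m • (1 : Matrix (Fin N) (Fin N) ℝ) - J').mulVec v = 0 := by
      rw [Matrix.sub_mulVec, Matrix.smul_mulVec, Matrix.one_mulVec, hv1, sub_self]
    have hdz : det (ε' m • (1 : Matrix (Fin N) (Fin N) ℝ) - J') = 0 :=
      Matrix.exists_mulVec_eq_zero_iff.mp ⟨v, hv.2, hker⟩
    rw [Polynomial.IsRoot, eval_charpoly', hdz]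
  have hQx : ∀ x : ℝ, det (x • (1 : Matrix (Fin N) (Fin N) ℝ) - J')
      = ∏ m, (x - ε' m) := by
    intro x
    rw [← eval_charpoly', charpoly_eq_prod J' ε' hmono'.injective hroot]
    simp [eval_prod]
  -- the polynomial identity
  set P : ℝ[X] := ∑ k, C ((Λ 0 k)^2) * ∏ j ∈ Finset.univ.erase k, (X - C (ε j)) with hP
  set Q : ℝ[X] := ∏ m, (X - C (ε' m)) with hQ
  have hPev : ∀ x : ℝ, P.eval x
      = ∑ k, (Λ 0 k)^2 * ∏ j ∈ Finset.univ.erase k, (x - ε j) := by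
    intro x
    simp [hP, eval_finset_sum, eval_prod]
  have hQev : ∀ x : ℝ, Q.eval x = ∏ m, (x - ε' m) := by
    intro x
    simp [hQ, eval_prod]
  have hPQ : P = Q := by
    apply Polynomial.eq_of_infinite_eval_eq
    apply Set.Infinite.mono ?_ ((Set.finite_range ε).infinite_compl)
    intro x hx
    have hx' : x ∉ Set.range ε := hx
    have h00 := congrFun (congrFun (hAadj x hx') 0) 0
    have hA00 : (A x) 0 0 = ∑ k, (Λ 0 k)^2 * ∏ j ∈ Finset.univ.erase k, (x - ε j) := by
      simp only [hA, Matrix.of_apply]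
      exact Finset.sum_congr rfl fun k _ => by ring
    have hadj00 := adjugate_zero_zero (x • (1 : Matrix (Fin (N+1)) (Fin (N+1)) ℝ) - J)
    show P.eval x = Q.eval x
    rw [hPev, hQev, ← hA00, h00, hadj00, hsub x, hQx x]
  -- evaluate at ε n and conclude
  intro n
  have hval : ∑ k, (Λ 0 k)^2 * ∏ j ∈ Finset.univ.erase k, (ε n - ε j)
      = ∏ m, (ε n - ε' m) := by
    rw [← hPev, hPQ, hQev]
  have hsingle : ∑ k, (Λ 0 k)^2 * ∏ j ∈ Finset.univ.erase k, (ε n - ε j)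
      = (Λ 0 n)^2 * ∏ j ∈ Finset.univ.erase n, (ε n - ε j) := by
    refine Finset.sum_eq_single n ?_ ?_
    · intro k _ hk
      have hnmem : n ∈ Finset.univ.erase k := Finset.mem_erase.mpr ⟨Ne.symm hk, Finset.mem_univ n⟩
      rw [Finset.prod_eq_zero hnmem (by ring), mul_zero]
    · intro h; exact absurd (Finset.mem_univ n) h
  have hDne : ∏ k ∈ Finset.univ.erase n, (ε n - ε k) ≠ 0 := by
    refine Finset.prod_ne_zero_iff.mpr fun k hk => ?_
    have hkn : k ≠ n := (Finset.mem_erase.mp hk).1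
    exact sub_ne_zero.mpr fun h => hkn (hmono.injective h.symm)
  rw [eq_div_iff hDne, ← hval, hsingle]
end

section
/- (Strict interlacing.) Let N ≥ 2, let J be an N×N real symmetric tridiagonal matrix with nonzero off-diagonal entries, let ε_0 < ε_1 < … < ε_{N−1} be its eigenvalues, and let ε̂_0 < … < ε̂_{N−2} be the eigenvalues of the (N−1)×(N−1) submatrix of J obtained by deleting its first row and first column. Then the two spectra strictly interlace: ε_0 < ε̂_0 < ε_1 < ε̂_1 < ε_2 < … < ε̂_{N−2} < ε_{N−1}. -/
/-!
Let `p` and `q` be the characteristic polynomials of `J` and of its trailing submatrix. Fix an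
eigenvalue `λ = ε k` with eigenvector `v`. The three-term recursion of a tridiagonal matrix with
nonzero off-diagonal forces `v 0 ≠ 0` and makes the eigenspace the line through `v`. Hence the
adjugate of the symmetric matrix `λ - J`, whose columns lie in its kernel, is `γ • v vᵀ`. Its
`(0, 0)` entry is `q λ`, while `adj (λ - J) v = p'(λ) v` with `p'(λ) = ∏_{j ≠ k} (λ - ε j)`; so
`q λ ‖v‖² = p'(λ) (v 0)²`, and `q (ε k)` has the sign of `p'(ε k)`, which alternates in `k`.
By the intermediate value theorem `q` has a root in each of the `N` intervals `(ε k, ε (k + 1))`,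
and these are all of its `N` roots.
-/

open Matrix Polynomial Finset

theorem StrictMono.eq_of_forall_mem_range {α : Type*} [Preorder α] {n : ℕ} {f g : Fin n → α}
    (hf : StrictMono f) (hg : StrictMono g) (h : ∀ k, f k ∈ Set.range g) : f = g := by
  choose σ hσ using h
  have hσ_mono : StrictMono σ := fun a b hab ↦ hg.lt_iff_lt.mp (by rw [hσ, hσ]; exact hf hab)
  have hfg : f = g ∘ σ := funext fun k ↦ (hσ k).symm
  rw [← hf.range_inj hg, hfg, Set.range_comp,
    (Finite.surjective_of_injective hσ_mono.injective).range_eq, Set.image_univ]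

theorem exists_mem_Ioo_eq_zero_of_mul_neg {α : Type*} [ConditionallyCompleteLinearOrder α]
    [TopologicalSpace α] [OrderTopology α] [DenselyOrdered α] {f : α → ℝ} {a b : α} (hab : a ≤ b)
    (hf : ContinuousOn f (Set.Icc a b)) (h : f a * f b < 0) : ∃ c ∈ Set.Ioo a b, f c = 0 := by
  rcases mul_neg_iff.mp h with ⟨ha, hb⟩ | ⟨ha, hb⟩
  · exact intermediate_value_Ioo' hab hf ⟨hb, ha⟩
  · exact intermediate_value_Ioo hab hf ⟨ha, hb⟩

theorem prod_erase_sub_mul_prod_erase_sub_neg {ι R : Type*} [Fintype ι] [LinearOrder ι]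
    [CommRing R] [LinearOrder R] [IsStrictOrderedRing R] {ε : ι → R} (hε : StrictMono ε)
    {a b : ι} (hab : a ⋖ b) :
    (∏ j ∈ univ.erase a, (ε a - ε j)) * ∏ j ∈ univ.erase b, (ε b - ε j) < 0 := by
  rw [← mul_prod_erase _ _ (mem_erase.mpr ⟨hab.lt.ne', mem_univ b⟩),
    ← mul_prod_erase _ _ (mem_erase.mpr ⟨hab.lt.ne, mem_univ a⟩), erase_right_comm (a := b)]
  calc _ = (ε a - ε b) * (ε b - ε a) *
        ∏ j ∈ (univ.erase a).erase b, ((ε a - ε j) * (ε b - ε j)) := by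
        rw [prod_mul_distrib]; ring
    _ < 0 := by
      refine mul_neg_of_neg_of_pos (mul_neg_of_neg_of_pos (sub_neg.mpr (hε hab.lt))
        (sub_pos.mpr (hε hab.lt))) (prod_pos fun j hj ↦ ?_)
      simp only [mem_erase, mem_univ, and_true] at hj
      rcases lt_or_gt_of_ne hj.2 with hja | haj
      · exact mul_pos (sub_pos.mpr (hε hja)) (sub_pos.mpr (hε (hja.trans hab.lt)))
      · have hbj : b < j := (hab.ge_of_gt haj).lt_of_ne hj.1.symm
        exact mul_pos_of_neg_of_neg (sub_neg.mpr (hε haj)) (sub_neg.mpr (hε hbj))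

namespace Matrix

variable {K : Type*} [Field K] {n : Type*} [Fintype n] [DecidableEq n]

theorem charpoly_eq_prod_of_hasEigenvalue {A : Matrix n n K} {ε : n → K}
    (hε : Function.Injective ε) (heig : ∀ i, Module.End.HasEigenvalue A.mulVecLin (ε i)) :
    A.charpoly = ∏ i, (X - C (ε i)) := by
  refine eq_of_monic_of_dvd_of_natDegree_le (monic_prod_of_monic _ _ fun i _ ↦ monic_X_sub_C _)
    A.charpoly_monic (Fintype.prod_dvd_of_coprime (pairwise_coprime_X_sub_C hε) fun i ↦ ?_) ?_
  · rw [dvd_iff_isRoot, ← charpoly_mulVecLin, ← Module.End.hasEigenvalue_iff_isRoot_charpoly]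
    exact heig i
  · rw [charpoly_natDegree_eq_dim, natDegree_prod_of_monic _ _ fun i _ ↦ monic_X_sub_C _]
    simp

theorem adjugate_charmatrix_mulVec_of_mulVec_eq_smul {A : Matrix n n K} {μ : K} {v : n → K}
    (hv : A *ᵥ v = μ • v) {g : K[X]} (hg : A.charpoly = (X - C μ) * g) :
    (scalar n μ - A).adjugate *ᵥ v = g.eval μ • v := by
  set w : n → K[X] := C ∘ v
  have hcw : A.charmatrix *ᵥ w = (X - C μ) • w := by
    ext i
    rw [charmatrix, sub_mulVec, Pi.sub_apply, scalar_apply, mulVec_diagonal,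
      RingHom.mapMatrix_apply, ← RingHom.map_mulVec, hv]
    simp [w, sub_mul]
  have hadj : A.charmatrix.adjugate *ᵥ w = g • w := by
    refine smul_right_injective _ (X_sub_C_ne_zero μ) ?_
    dsimp only
    rw [← mulVec_smul, ← hcw, mulVec_mulVec, adjugate_mul, smul_mulVec, one_mulVec, ← charpoly, hg,
      mul_smul]
  have hev : (evalRingHom μ).mapMatrix A.charmatrix = scalar n μ - A := by
    ext i j
    obtain rfl | hij := eq_or_ne i j <;> simp [*]
  have hmap := (evalRingHom μ).map_adjugate A.charmatrix
  rw [hev, RingHom.mapMatrix_apply] at hmap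
  ext i
  have := congrArg (evalRingHom μ) (congrFun hadj i)
  rw [RingHom.map_mulVec, hmap] at this
  simpa [w, Function.comp_def] using this

theorem adjugate_eq_smul_vecMulVec {M : Matrix n n K} (hM : M.IsSymm) {v : n → K} {i : n}
    (hv : M *ᵥ v = 0) (hvi : v i ≠ 0) (hker : ∀ w, M *ᵥ w = 0 → w i = 0 → w = 0) :
    M.adjugate = (M.adjugate i i / v i ^ 2) • vecMulVec v v := by
  have hdet : M.det = 0 :=
    exists_mulVec_eq_zero_iff.mp ⟨v, fun h ↦ hvi (by simp [h]), hv⟩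
  have hline : ∀ w, M *ᵥ w = 0 → w = (w i / v i) • v := fun w hw ↦
    sub_eq_zero.mp <| hker _ (by rw [mulVec_sub, mulVec_smul, hw, hv, smul_zero, sub_zero])
      (by simp [hvi])
  -- the columns of `adjugate M` lie in `ker M` because `M * adjugate M = det M • 1 = 0`
  have hcol : ∀ k j, M.adjugate k j = M.adjugate i j / v i * v k := fun k j ↦ by
    have hj : M *ᵥ (M.adjugate *ᵥ Pi.single j 1) = 0 := by
      rw [mulVec_mulVec, mul_adjugate, hdet, zero_smul, zero_mulVec]
    simpa [mulVec_single_one] using congrFun (hline _ hj) k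
  have hsymm : M.adjugateᵀ = M.adjugate := by rw [adjugate_transpose, hM]
  ext k j
  rw [hcol k j, ← congrFun (congrFun hsymm i) j, transpose_apply, hcol j i]
  simp only [smul_apply, vecMulVec_apply, smul_eq_mul]
  field_simp

theorem eval_charpoly_submatrix_succ_mul_dotProduct {m : ℕ}
    {A : Matrix (Fin (m + 1)) (Fin (m + 1)) K} (hA : A.IsSymm) {μ : K} {v : Fin (m + 1) → K}
    (hv : A *ᵥ v = μ • v) (hv0 : v 0 ≠ 0) (hker : ∀ w, A *ᵥ w = μ • w → w 0 = 0 → w = 0)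
    {g : K[X]} (hg : A.charpoly = (X - C μ) * g) :
    (A.submatrix Fin.succ Fin.succ).charpoly.eval μ * (v ⬝ᵥ v) = g.eval μ * v 0 ^ 2 := by
  set M := scalar (Fin (m + 1)) μ - A
  have hM : ∀ w, M *ᵥ w = 0 ↔ A *ᵥ w = μ • w := fun w ↦ by
    rw [sub_mulVec, sub_eq_zero, eq_comm]
    simp
  have hadj := adjugate_eq_smul_vecMulVec (M := M) (by simp [M, IsSymm, hA.eq]) ((hM v).2 hv) hv0
    fun w hw ↦ hker w ((hM w).1 hw)
  set γ := M.adjugate 0 0 / v 0 ^ 2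
  have hγ : γ * (v ⬝ᵥ v) = g.eval μ := by
    have := congrFun (adjugate_charmatrix_mulVec_of_mulVec_eq_smul hv hg) 0
    rw [hadj, smul_mulVec, vecMulVec_mulVec] at this
    simp only [smul_eq_mul, op_smul_eq_smul, Pi.smul_apply] at this
    exact mul_right_cancel₀ hv0 (by rw [← this]; ring)
  have h00 : M.adjugate 0 0 = (A.submatrix Fin.succ Fin.succ).charpoly.eval μ := by
    rw [adjugate_fin_succ_eq_det_submatrix, eval_charpoly]
    simp only [M, Fin.succAbove_zero, Fin.val_zero, add_zero, pow_zero, one_mul]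
    congr 1
    ext i j
    simp [diagonal_apply]
  have h00' := congrFun (congrFun hadj 0) 0
  rw [smul_apply, vecMulVec_apply, smul_eq_mul] at h00'
  rw [← h00, h00', ← hγ]
  ring

theorem eq_zero_of_mulVec_eq_smul_of_apply_zero {m : ℕ}
    {A : Matrix (Fin (m + 1)) (Fin (m + 1)) K}
    (htri : ∀ i j : Fin (m + 1), (i : ℕ) + 2 ≤ (j : ℕ) → A i j = 0)
    (hoff : ∀ i j : Fin (m + 1), (i : ℕ) + 1 = (j : ℕ) → A i j ≠ 0)
    {μ : K} {w : Fin (m + 1) → K} (hw : A *ᵥ w = μ • w) (h0 : w 0 = 0) : w = 0 := by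
  -- row `i` of `A *ᵥ w = μ • w` determines `w (i + 1)` from `w 0, …, w i`
  suffices h : ∀ i : Fin (m + 1), ∀ j ≤ i, w j = 0 from funext fun j ↦ h j j le_rfl
  refine Fin.induction (fun j hj ↦ by rwa [Fin.le_zero_iff.mp hj]) fun i ih j hj ↦ ?_
  rcases hj.lt_or_eq with hj | rfl
  · exact ih j (Fin.le_castSucc_iff.mpr hj)
  have hrow : ∑ j, A i.castSucc j * w j = A i.castSucc i.succ * w i.succ := by
    refine Fintype.sum_eq_single _ fun j hj ↦ ?_
    rcases le_or_gt j i.castSucc with hle | hlt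
    · rw [ih j hle, mul_zero]
    · rw [htri _ _ ?_, zero_mul]
      have : (i : ℕ) + 1 ≠ j := fun h ↦ hj (Fin.ext h.symm)
      simp only [Fin.lt_def, Fin.val_castSucc] at hlt
      simp only [Fin.val_castSucc]
      omega
  have := congrFun hw i.castSucc
  rw [mulVec, dotProduct, hrow, Pi.smul_apply, ih _ le_rfl, smul_zero] at this
  exact (mul_eq_zero.mp this).resolve_left (hoff _ _ (by simp))


theorem eval_charpoly_submatrix_succ_mul_prod_erase_pos {m : ℕ}
    {J : Matrix (Fin (m + 1)) (Fin (m + 1)) ℝ} (hsym : J.IsSymm)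
    (htri : ∀ i j : Fin (m + 1), (i : ℕ) + 2 ≤ (j : ℕ) → J i j = 0)
    (hoff : ∀ i j : Fin (m + 1), (i : ℕ) + 1 = (j : ℕ) → J i j ≠ 0)
    {ε : Fin (m + 1) → ℝ} (hε : Function.Injective ε)
    (heig : ∀ i, Module.End.HasEigenvalue J.mulVecLin (ε i)) (k : Fin (m + 1)) :
    0 < (J.submatrix Fin.succ Fin.succ).charpoly.eval (ε k) * ∏ j ∈ univ.erase k, (ε k - ε j) := by
  obtain ⟨v, hv⟩ := (heig k).exists_hasEigenvector
  have hker : ∀ w, J *ᵥ w = ε k • w → w 0 = 0 → w = 0 := fun w hw ↦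
    eq_zero_of_mulVec_eq_smul_of_apply_zero htri hoff hw
  have hv0 : v 0 ≠ 0 := fun h ↦ hv.2 (hker v hv.apply_eq_smul h)
  have hg : J.charpoly = (X - C (ε k)) * ∏ j ∈ univ.erase k, (X - C (ε j)) := by
    rw [charpoly_eq_prod_of_hasEigenvalue hε heig,
      mul_prod_erase _ (fun j ↦ X - C (ε j)) (mem_univ k)]
  have key := eval_charpoly_submatrix_succ_mul_dotProduct hsym hv.apply_eq_smul hv0 hker hg
  simp only [eval_prod, eval_sub, eval_X, eval_C] at key
  set D := ∏ j ∈ univ.erase k, (ε k - ε j)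
  have hD : D ≠ 0 :=
    prod_ne_zero_iff.mpr fun j hj ↦ sub_ne_zero.mpr (hε.ne (ne_of_mem_erase hj).symm)
  have hvv : 0 ≤ v ⬝ᵥ v := sum_nonneg fun i _ ↦ mul_self_nonneg (v i)
  refine pos_of_mul_pos_right ?_ hvv
  calc 0 < (D * v 0) ^ 2 := pow_two_pos_of_ne_zero (mul_ne_zero hD hv0)
    _ = _ := by linear_combination D * key.symm

end Matrix

theorem tridiagonal_interlacing_general
    (N : ℕ) (J : Matrix (Fin (N + 1)) (Fin (N + 1)) ℝ)
    (hsym : J.IsSymm)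
    (htri : ∀ i j : Fin (N + 1), (i : ℕ) + 2 ≤ (j : ℕ) → J i j = 0)
    (hoff : ∀ i j : Fin (N + 1), (i : ℕ) + 1 = (j : ℕ) → J i j ≠ 0)
    (ε : Fin (N + 1) → ℝ) (hmono : StrictMono ε)
    (hεeig : ∀ i, Module.End.HasEigenvalue J.mulVecLin (ε i))
    (ε' : Fin N → ℝ) (hmono' : StrictMono ε')
    (hε'eig : ∀ i, Module.End.HasEigenvalue
      (J.submatrix Fin.succ Fin.succ).mulVecLin (ε' i)) :
    ∀ i : Fin N, ε i.castSucc < ε' i ∧ ε' i < ε i.succ := by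
  set q := (J.submatrix Fin.succ Fin.succ).charpoly
  have hq : q = ∏ i, (X - C (ε' i)) := charpoly_eq_prod_of_hasEigenvalue hmono'.injective hε'eig
  have hsign : ∀ k : Fin N, q.eval (ε k.castSucc) * q.eval (ε k.succ) < 0 := fun k ↦ by
    have hcov : k.castSucc ⋖ k.succ := Fin.orderSucc_castSucc k ▸ Order.covBy_succ_of_not_isMax
      (not_isMax_iff.mpr ⟨_, k.castSucc_lt_succ⟩)
    have h₁ := eval_charpoly_submatrix_succ_mul_prod_erase_pos hsym htri hoff hmono.injective hεeig
      k.castSucc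
    have h₂ := eval_charpoly_submatrix_succ_mul_prod_erase_pos hsym htri hoff hmono.injective hεeig
      k.succ
    refine neg_of_mul_pos_left ?_ (prod_erase_sub_mul_prod_erase_sub_neg hmono hcov).le
    linear_combination (mul_pos h₁ h₂)
  choose r hr hr₀ using fun k ↦
    exists_mem_Ioo_eq_zero_of_mul_neg (hmono k.castSucc_lt_succ).le q.continuousOn (hsign k)
  have hr_mono : StrictMono r := fun a b hab ↦
    (hr a).2.trans_le ((hmono.monotone (Fin.succ_le_castSucc_iff.mpr hab)).trans (hr b).1.le)
  have hr_mem : ∀ k, r k ∈ Set.range ε' := fun k ↦ by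
    obtain ⟨i, -, hi⟩ := prod_eq_zero_iff.mp (by simpa [hq, eval_prod] using hr₀ k)
    exact ⟨i, (sub_eq_zero.mp hi).symm⟩
  rw [← hr_mono.eq_of_forall_mem_range hmono' hr_mem]
  exact fun k ↦ hr k

/-- **strict interlacing.** Let `J` be an `(N+1) × (N+1)` (with `N ≥ 1`,
so the size is at least `2`) real symmetric tridiagonal matrix with nonzero
off-diagonal entries, let `ε 0 < … < ε N` be its eigenvalues, and let
`ε̂ 0 < … < ε̂ (N-1)` be the eigenvalues of the `N × N` submatrix of `J` obtained by
deleting its first row and first column. Then the two spectra strictly interlace: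
`ε 0 < ε̂ 0 < ε 1 < ε̂ 1 < … < ε̂ (N-1) < ε N`. -/
theorem tridiagonal_interlacing
    (N : ℕ) (hN : 1 ≤ N) (J : Matrix (Fin (N + 1)) (Fin (N + 1)) ℝ)
    (hsym : J.IsSymm)
    (htri : ∀ i j : Fin (N + 1), (i : ℕ) + 2 ≤ (j : ℕ) → J i j = 0)
    (hoff : ∀ i j : Fin (N + 1), (i : ℕ) + 1 = (j : ℕ) → J i j ≠ 0)
    (ε : Fin (N + 1) → ℝ) (hmono : StrictMono ε)
    (hεeig : ∀ i, Module.End.HasEigenvalue J.mulVecLin (ε i))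
    (hεall : ∀ t : ℝ, Module.End.HasEigenvalue J.mulVecLin t → ∃ i, t = ε i)
    (ε' : Fin N → ℝ) (hmono' : StrictMono ε')
    (hε'eig : ∀ i, Module.End.HasEigenvalue
      (J.submatrix Fin.succ Fin.succ).mulVecLin (ε' i))
    (hε'all : ∀ t : ℝ, Module.End.HasEigenvalue
      (J.submatrix Fin.succ Fin.succ).mulVecLin t → ∃ i, t = ε' i) :
    ∀ i : Fin N, ε i.castSucc < ε' i ∧ ε' i < ε i.succ :=
  tridiagonal_interlacing_general N J hsym htri hoff ε hmono hεeig ε' hmono' hε'eig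
end

section
/- (Exactness of the matrix-element quadrature.) Let N ≥ 1, let J be the N×N Jacobi matrix of an orthonormal polynomial sequence (p_n) for μ, let ε_0, …, ε_{N−1} be the eigenvalues of J, and for each k let Λ_{·,k} be the unit eigenvector of J for ε_k normalized so that Λ_{0,k} > 0. Then for all 0 ≤ n, m ≤ N−1 and every real polynomial f with n + m + deg f ≤ 2N − 1, ∫ p_n(x) f(x) p_m(x) dμ(x) = ∑_{k=0}^{N−1} Λ_{n,k} f(ε_k) Λ_{m,k}. -/
open MeasureTheory Polynomial Matrix

/-!
Write `L q = ∫ q dμ`. Expanding in the orthonormal basis gives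
`L (q r) = ∑_{l < N} L (q pₗ) L (pₗ r)` as soon as one of `q`, `r` has degree `< N`.
The Jacobi matrix is `J i j = L (x pᵢ pⱼ)` (the band structure is orthogonality), so inserting
this expansion `d` times gives `(J ^ d) n m = L (xᵈ pₙ pₘ)` while `n + m + d ≤ 2N - 1`: at each
step one of the two factors `x pᵢ`, `x^(d-1) pₘ` still has degree `< N`. On the other side,
eigenvectors of the symmetric matrix `J` for distinct eigenvalues are orthogonal, so `Λ` is an
orthogonal matrix with `J = Λ diag(ε) Λᵀ`, and `f(J) n m = ∑ₖ Λ n k f(εₖ) Λ m k`.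
-/

namespace Matrix

variable {n K : Type*} [Fintype n] [Field K]

theorem IsSymm.dotProduct_eq_zero_of_mulVec_eq_smul {A : Matrix n n K} (hA : A.IsSymm)
    {v w : n → K} {a b : K} (hv : A *ᵥ v = a • v) (hw : A *ᵥ w = b • w) (hab : a ≠ b) :
    v ⬝ᵥ w = 0 := by
  have h : a * (v ⬝ᵥ w) = b * (v ⬝ᵥ w) :=
    calc a * (v ⬝ᵥ w) = A *ᵥ v ⬝ᵥ w := by rw [hv, smul_dotProduct, smul_eq_mul]
      _ = v ⬝ᵥ A *ᵥ w := by rw [dotProduct_mulVec, ← mulVec_transpose, hA.eq]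
      _ = b * (v ⬝ᵥ w) := by rw [hw, dotProduct_smul, smul_eq_mul]
  have hsub : (a - b) * (v ⬝ᵥ w) = 0 := by rw [sub_mul, h, sub_self]
  exact (mul_eq_zero.mp hsub).resolve_left (sub_ne_zero.mpr hab)

variable [DecidableEq n] {A : Matrix n n K} {ε : n → K} {Λ : Matrix n n K}

theorem IsSymm.transpose_mul_self_eq_one_of_eigenvectors (hA : A.IsSymm)
    (hε : Function.Injective ε) (hΛ : ∀ k, A *ᵥ (fun i => Λ i k) = ε k • fun i => Λ i k)
    (hunit : ∀ k, ∑ i, Λ i k ^ 2 = 1) : Λᵀ * Λ = 1 := by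
  ext k l
  rw [mul_apply, one_apply]
  split_ifs with hkl
  · subst hkl
    simpa [sq] using hunit k
  · exact hA.dotProduct_eq_zero_of_mulVec_eq_smul (hΛ k) (hΛ l) (hε.ne hkl)

theorem eq_mul_diagonal_mul_transpose_of_eigenvectors
    (hΛ : ∀ k, A *ᵥ (fun i => Λ i k) = ε k • fun i => Λ i k) (hΛΛ : Λ * Λᵀ = 1) :
    A = Λ * diagonal ε * Λᵀ := by
  have hAΛ : A * Λ = Λ * diagonal ε := by
    ext i k
    rw [mul_diagonal, mul_comm]
    exact congrFun (hΛ k) i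
  rw [← hAΛ, Matrix.mul_assoc, hΛΛ, Matrix.mul_one]

theorem aeval_mul_mul_transpose (hΛ : Λᵀ * Λ = 1) (D : Matrix n n K) (f : K[X]) :
    aeval (Λ * D * Λᵀ) f = Λ * aeval D f * Λᵀ :=
  let u : (Matrix n n K)ˣ := ⟨Λ, Λᵀ, mul_eq_one_comm.mp hΛ, hΛ⟩
  aeval_algHom_apply (MulSemiringAction.toAlgEquiv K _ (ConjAct.toConjAct u)) D f

theorem aeval_diagonal (d : n → K) (f : K[X]) :
    aeval (diagonal d) f = diagonal fun k => f.eval (d k) := by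
  rw [← diagonalAlgHom_apply K, aeval_algHom_apply, aeval_pi_apply, diagonalAlgHom_apply]
  simp only [coe_aeval_eq_eval]

theorem IsSymm.aeval_apply_eq_sum_of_eigenvectors (hA : A.IsSymm) (hε : Function.Injective ε)
    (hΛ : ∀ k, A *ᵥ (fun i => Λ i k) = ε k • fun i => Λ i k) (hunit : ∀ k, ∑ i, Λ i k ^ 2 = 1)
    (f : K[X]) (i j : n) : aeval A f i j = ∑ k, Λ i k * f.eval (ε k) * Λ j k := by
  have hΛtΛ := hA.transpose_mul_self_eq_one_of_eigenvectors hε hΛ hunit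
  rw [eq_mul_diagonal_mul_transpose_of_eigenvectors hΛ (mul_eq_one_comm.mp hΛtΛ),
    aeval_mul_mul_transpose hΛtΛ, aeval_diagonal, mul_apply]
  simp only [mul_diagonal, transpose_apply]

end Matrix

namespace Polynomial.Sequence

variable {K : Type*} [Field K] (S : Sequence K)

theorem linearMap_apply_eq_of_natDegree_lt {M : Type*} [AddCommMonoid M] [Module K M]
    {f g : K[X] →ₗ[K] M} {m : ℕ} (h : ∀ i < m, f (S i) = g (S i)) {q : K[X]}
    (hq : q.natDegree < m) : f q = g q := by
  refine LinearMap.eqOn_span (s := S '' Set.Iio m) ?_ ?_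
  · rintro _ ⟨i, hi, rfl⟩
    exact h i hi
  · rw [S.span_degreeLT fun i _ => (leadingCoeff_ne_zero.mpr (S.ne_zero i)).isUnit, mem_degreeLT]
    exact degree_le_natDegree.trans_lt (by exact_mod_cast hq)

theorem natDegree_X_pow_mul_le (d i : ℕ) : (X ^ d * S i).natDegree ≤ d + i :=
  natDegree_mul_le.trans (by simp)

theorem natDegree_X_mul_le (i : ℕ) : (X * S i).natDegree ≤ i + 1 :=
  natDegree_mul_le.trans (by simp [add_comm])

noncomputable def mulXMatrix (L : K[X] →ₗ[K] K) (N : ℕ) : Matrix (Fin N) (Fin N) K :=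
  Matrix.of fun i j => L (X * S i * S j)

@[simp]
theorem mulXMatrix_apply (L : K[X] →ₗ[K] K) {N : ℕ} (i j : Fin N) :
    S.mulXMatrix L N i j = L (X * S i * S j) :=
  rfl

theorem mulXMatrix_isSymm (L : K[X] →ₗ[K] K) (N : ℕ) : (S.mulXMatrix L N).IsSymm := by
  ext i j
  simp only [Matrix.transpose_apply, mulXMatrix_apply, mul_right_comm]

variable {L : K[X] →ₗ[K] K} (hL : ∀ i j, L (S i * S j) = if i = j then 1 else 0)
include hL

theorem apply_mul_eq_zero_of_natDegree_lt {i : ℕ} {q : K[X]} (hq : q.natDegree < i) :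
    L (S i * q) = 0 :=
  S.linearMap_apply_eq_of_natDegree_lt (f := L ∘ₗ LinearMap.mulLeft K (S i)) (g := 0)
    (fun j hj => by simp [hL, hj.ne']) hq

theorem sum_apply_mul_smul_eq {m : ℕ} {q : K[X]} (hq : q.natDegree < m) :
    ∑ i ∈ Finset.range m, L (q * S i) • S i = q := by
  have := S.linearMap_apply_eq_of_natDegree_lt (g := LinearMap.id)
    (f := ∑ i ∈ Finset.range m, (L ∘ₗ LinearMap.mulRight K (S i)).smulRight (S i))
    (fun j hj => by simp [hL, hj]) hq
  simpa using this

theorem apply_mul_eq_sum_of_natDegree_lt_left {m : ℕ} {q : K[X]} (hq : q.natDegree < m)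
    (r : K[X]) : L (q * r) = ∑ i ∈ Finset.range m, L (q * S i) * L (S i * r) := by
  conv_lhs => rw [← S.sum_apply_mul_smul_eq hL hq]
  simp only [Finset.sum_mul, map_sum, smul_mul_assoc, map_smul, smul_eq_mul]

theorem apply_mul_eq_sum_of_natDegree_lt_right {m : ℕ} {r : K[X]} (hr : r.natDegree < m)
    (q : K[X]) : L (q * r) = ∑ i ∈ Finset.range m, L (q * S i) * L (S i * r) := by
  rw [mul_comm, S.apply_mul_eq_sum_of_natDegree_lt_left hL hr]
  simp only [mul_comm]

theorem apply_X_mul_mul_eq_zero {i j : ℕ} (hij : i + 1 < j) : L (X * S i * S j) = 0 := by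
  rw [mul_comm]
  exact S.apply_mul_eq_zero_of_natDegree_lt hL ((S.natDegree_X_mul_le i).trans_lt hij)

theorem mulXMatrix_pow_apply {N : ℕ} (d : ℕ) (i j : Fin N) (h : i + j + d < 2 * N) :
    (S.mulXMatrix L N ^ d) i j = L (X ^ d * S i * S j) := by
  induction d generalizing i with
  | zero => simp [Matrix.one_apply, hL, Fin.ext_iff]
  | succ d ih =>
    have hterm (l : Fin N) : S.mulXMatrix L N i l * (S.mulXMatrix L N ^ d) l j =
        L (X * S i * S l) * L (S l * (X ^ d * S j)) := by
      rcases le_or_gt (l : ℕ) (i + 1) with hl | hl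
      · rw [ih l (by omega), mulXMatrix_apply, mul_comm (X ^ d), mul_assoc (S l)]
      · rw [mulXMatrix_apply, S.apply_X_mul_mul_eq_zero hL hl, zero_mul, zero_mul]
    rw [pow_succ', Matrix.mul_apply, Finset.sum_congr rfl fun l _ => hterm l,
      Fin.sum_univ_eq_sum_range (fun l => L (X * S i * S l) * L (S l * (X ^ d * S j))),
      show X ^ (d + 1) * S i * S j = X * S i * (X ^ d * S j) by ring]
    rcases lt_or_ge ((i : ℕ) + 1) N with hi | hi
    · exact (S.apply_mul_eq_sum_of_natDegree_lt_left hL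
        ((S.natDegree_X_mul_le i).trans_lt hi) _).symm
    · exact (S.apply_mul_eq_sum_of_natDegree_lt_right hL
        ((S.natDegree_X_pow_mul_le d j).trans_lt (by omega)) _).symm

theorem aeval_mulXMatrix_apply {N : ℕ} (f : K[X]) (i j : Fin N)
    (h : i + j + f.natDegree < 2 * N) :
    aeval (S.mulXMatrix L N) f i j = L (S i * f * S j) := by
  conv_rhs => rw [f.as_sum_range_C_mul_X_pow]
  simp only [aeval_eq_sum_range, Matrix.sum_apply, Finset.mul_sum, Finset.sum_mul, map_sum]
  refine Finset.sum_congr rfl fun d hd => ?_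
  rw [Matrix.smul_apply, S.mulXMatrix_pow_apply hL d i j
    (by have := Finset.mem_range.mp hd; omega), smul_eq_mul, ← smul_eq_mul, ← map_smul,
    smul_eq_C_mul]
  congr 1
  ring

end Polynomial.Sequence

section Integral

variable {μ : Measure ℝ}

theorem integrable_eval_of_integrable_pow (hμ : ∀ k : ℕ, Integrable (fun x : ℝ => x ^ k) μ)
    (q : ℝ[X]) : Integrable (fun x => q.eval x) μ := by
  simp only [eval_eq_sum_range]
  exact integrable_finsetSum _ fun i _ => (hμ i).const_mul _

noncomputable def polynomialIntegral (μ : Measure ℝ)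
    (hμ : ∀ k : ℕ, Integrable (fun x : ℝ => x ^ k) μ) : ℝ[X] →ₗ[ℝ] ℝ where
  toFun q := ∫ x, q.eval x ∂μ
  map_add' q r := by
    simp only [eval_add]
    exact integral_add (integrable_eval_of_integrable_pow hμ q)
      (integrable_eval_of_integrable_pow hμ r)
  map_smul' c q := by simp only [eval_smul, smul_eq_mul, integral_const_mul, RingHom.id_apply]

@[simp]
theorem polynomialIntegral_apply (hμ : ∀ k : ℕ, Integrable (fun x : ℝ => x ^ k) μ) (q : ℝ[X]) :
    polynomialIntegral μ hμ q = ∫ x, q.eval x ∂μ :=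
  rfl

end Integral

namespace IsOrthonormalPolySeq

variable {μ : Measure ℝ} {p : ℕ → ℝ[X]} (hp : IsOrthonormalPolySeq μ p)

noncomputable def toSequence : Sequence ℝ where
  elems' := p
  degree_eq' n := by
    rw [degree_eq_natDegree (leadingCoeff_ne_zero.mp (hp.leadingCoeff_pos n).ne'), hp.natDegree_eq]

@[simp]
theorem toSequence_apply (n : ℕ) : hp.toSequence n = p n :=
  rfl

variable (hμ : ∀ k : ℕ, Integrable (fun x : ℝ => x ^ k) μ)
include hμ

theorem polynomialIntegral_mul (i j : ℕ) :
    polynomialIntegral μ hμ (hp.toSequence i * hp.toSequence j) = if i = j then 1 else 0 := by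
  simpa using hp.orthonormal i j

theorem jacobiMatrix_eq_mulXMatrix (N : ℕ) :
    jacobiMatrix μ p N = hp.toSequence.mulXMatrix (polynomialIntegral μ hμ) N := by
  ext i j
  have hband {i j : ℕ} (hij : i + 1 < j) := hp.toSequence.apply_X_mul_mul_eq_zero
    (hp.polynomialIntegral_mul hμ) hij
  simp only [toSequence_apply, polynomialIntegral_apply, eval_mul, eval_X] at hband
  simp only [jacobiMatrix, Sequence.mulXMatrix_apply, toSequence_apply, polynomialIntegral_apply,
    eval_mul, eval_X]
  split_ifs with h₁ h₂ h₃
  · simp only [← Fin.ext_iff.mpr h₁, sq, mul_assoc]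
  · simp only [← h₂, mul_assoc]
  · simp only [← h₃, mul_right_comm]
  · rcases lt_or_gt_of_ne h₁ with h | h
    · exact (hband (by omega)).symm
    · simpa only [mul_right_comm _ (eval _ (p i))] using (hband (by omega)).symm

end IsOrthonormalPolySeq

theorem jacobi_matrix_element_quadrature_general
    (μ : Measure ℝ) (p : ℕ → Polynomial ℝ)
    (hmom : ∀ k : ℕ, Integrable (fun x : ℝ => x ^ k) μ)
    (hp : IsOrthonormalPolySeq μ p)
    (N : ℕ)
    (ε : Fin N → ℝ) (Λ : Fin N → Fin N → ℝ)
    (hdistinct : Function.Injective ε)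
    (hEigen : ∀ k : Fin N,
      (jacobiMatrix μ p N).mulVec (fun i => Λ i k) = ε k • (fun i => Λ i k))
    (hUnit : ∀ k : Fin N, ∑ i : Fin N, (Λ i k) ^ 2 = 1)
    (n m : Fin N) (f : Polynomial ℝ)
    (hf : (n : ℕ) + (m : ℕ) + f.natDegree ≤ 2 * N - 1) :
    ∫ x, (p (n : ℕ)).eval x * f.eval x * (p (m : ℕ)).eval x ∂μ =
      ∑ k : Fin N, Λ n k * f.eval (ε k) * Λ m k := by
  have hJ := hp.jacobiMatrix_eq_mulXMatrix hmom N
  calc ∫ x, (p n).eval x * f.eval x * (p m).eval x ∂μ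
      = polynomialIntegral μ hmom (hp.toSequence n * f * hp.toSequence m) := by simp
    _ = aeval (jacobiMatrix μ p N) f n m := by
      rw [hJ, hp.toSequence.aeval_mulXMatrix_apply (hp.polynomialIntegral_mul hmom) f n m
        (by omega)]
    _ = ∑ k, Λ n k * f.eval (ε k) * Λ m k :=
      (hJ ▸ hp.toSequence.mulXMatrix_isSymm _ N).aeval_apply_eq_sum_of_eigenvectors
        hdistinct hEigen hUnit f n m

/-- **exactness of the matrix-element quadrature.** Let `J` be the
`N × N` Jacobi matrix of the orthonormal polynomial sequence `(pₙ)` for `μ`, with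
eigenvalues `ε k` and corresponding unit eigenvectors `Λ · k` normalized so that
`Λ 0 k > 0`. Then for every real polynomial `f` with `n + m + deg f ≤ 2N − 1`,
`∫ pₙ(x) f(x) pₘ(x) dμ = ∑ₖ Λₙₖ f(εₖ) Λₘₖ`. -/
theorem jacobi_matrix_element_quadrature
    (μ : Measure ℝ) (p : ℕ → Polynomial ℝ)
    (hmom : ∀ k : ℕ, Integrable (fun x : ℝ => x ^ k) μ)
    (hsupp : ∀ s : Finset ℝ, μ ((s : Set ℝ))ᶜ ≠ 0)
    (hp : IsOrthonormalPolySeq μ p)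
    (N : ℕ) (hN : 1 ≤ N)
    (ε : Fin N → ℝ) (Λ : Fin N → Fin N → ℝ)
    (hdistinct : Function.Injective ε)
    (hEigen : ∀ k : Fin N,
      (jacobiMatrix μ p N).mulVec (fun i => Λ i k) = ε k • (fun i => Λ i k))
    (hUnit : ∀ k : Fin N, ∑ i : Fin N, (Λ i k) ^ 2 = 1)
    (hPos : ∀ k : Fin N, 0 < Λ ⟨0, hN⟩ k)
    (n m : Fin N) (f : Polynomial ℝ)
    (hf : (n : ℕ) + (m : ℕ) + f.natDegree ≤ 2 * N - 1) :
    ∫ x, (p (n : ℕ)).eval x * f.eval x * (p (m : ℕ)).eval x ∂μ =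
      ∑ k : Fin N, Λ n k * f.eval (ε k) * Λ m k :=
  jacobi_matrix_element_quadrature_general μ p hmom hp N ε Λ hdistinct hEigen hUnit n m f hf
end

section
/- (Orthonormality of Meixner polynomials.) Let μ > 0 and 0 < β < 1. For all integers n, m ≥ 0, ∑_{k=0}^{∞} (1−β)^{2μ} · (2μ)_k · (β^k / k!) · M_n^μ(k; β) · M_m^μ(k; β) = δ_{n,m}, the series converging absolutely. -/
open Finset

/-- The Pochhammer symbol `(a)ⱼ = a(a+1)⋯(a+j−1)`. -/
noncomputable def poch (a : ℝ) (j : ℕ) : ℝ := (ascPochhammer ℝ j).eval a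

/-- The orthonormal Meixner polynomial
`Mₙ^μ(k; β) = √((2μ)ₙ/n!) β^{n/2}
  ∑_{j=0}^{min(n,k)} (−n)ⱼ(−k)ⱼ/((2μ)ⱼ j!) · (1 − 1/β)ʲ`. -/
noncomputable def meixner (μ β : ℝ) (n k : ℕ) : ℝ :=
  Real.sqrt (poch (2 * μ) n / (Nat.factorial n)) * Real.rpow β ((n : ℝ) / 2) *
    ∑ j ∈ range (min n k + 1),
      poch (-(n : ℝ)) j * poch (-(k : ℝ)) j /
        (poch (2 * μ) j * (Nat.factorial j)) * (1 - 1 / β) ^ j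

/-!
Write `Mₙ(k) = Aₙ Pₙ(k)`, where `Pₙ = ∑ᵢ (−n)ᵢ/((a)ᵢ i!) (1 − 1/β)ⁱ (−X)ᵢ` is a polynomial of
degree `n` and `a = 2μ`. Since `(−k)ᵢ` vanishes for `k < i`, shifting the summation index turns
every moment `∑ₖ w(k) (−k)ᵢ (k + a)ⱼ` of the weight `w(k) = (1 − β)ᵃ (a)ₖ βᵏ/k!` into a binomial
series, and after the cancellation `(1 − 1/β)(−β) = 1 − β` the pairing of `Pₙ` with `(k + a)ⱼ`
becomes a Chu–Vandermonde sum equal to `(a)ⱼ (−j)ₙ / ((a)ₙ (1 − β)ʲ)`. It vanishes for `j < n`, and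
the polynomials `(X + a)ⱼ`, `j < n`, span all polynomials of degree `< n`; so `Pₙ` is orthogonal
to `Pₘ` for `m < n`, and `⟨Pₙ, Pₙ⟩` only sees the leading coefficient of `Pₙ`, giving `1/Aₙ²`.
Absolute convergence comes for free, as a real series that converges unconditionally.
-/

open Polynomial
open scoped Nat

lemma poch_add (a : ℝ) (i j : ℕ) : poch a (i + j) = poch a i * poch (a + i) j := by
  simpa [poch, eval_comp] using (congrArg (eval a) (ascPochhammer_mul ℝ i j)).symm

lemma poch_pos {a : ℝ} (ha : 0 < a) (n : ℕ) : 0 < poch a n := ascPochhammer_pos n a ha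

lemma poch_neg_natCast (k i : ℕ) : poch (-k) i = (-1) ^ i * k.descFactorial i := by
  rw [poch, ascPochhammer_eval_neg_eq_descPochhammer, descPochhammer_eval_eq_descFactorial]

lemma poch_neg_natCast_of_lt {k i : ℕ} (h : k < i) : poch (-k) i = 0 :=
  ascPochhammer_eval_neg_coe_nat_of_lt h

lemma poch_one_sub_sub (b : ℝ) (i : ℕ) : poch (1 - b - i) i = (-1) ^ i * poch b i := by
  rw [show 1 - b - i = -(b + i - 1) by ring, poch, ascPochhammer_eval_neg_eq_descPochhammer,
    descPochhammer_eval_eq_ascPochhammer, poch, show b + i - 1 - i + 1 = b by ring]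

lemma choose_add_sub_one_eq_poch_div (x : ℝ) (k : ℕ) :
    Ring.choose (x + k - 1) k = poch x k / k ! := by
  rw [← Ring.multichoose_eq, eq_div_iff (Nat.cast_ne_zero.mpr k.factorial_ne_zero), mul_comm,
    ← nsmul_eq_mul, Ring.factorial_nsmul_multichoose_eq_ascPochhammer,
    ascPochhammer_smeval_eq_eval, poch]

lemma choose_neg_eq_poch_div (b : ℝ) (i : ℕ) :
    Ring.choose (-b) i = (-1) ^ i * poch b i / i ! := by
  rw [← poch_one_sub_sub, ← choose_add_sub_one_eq_poch_div]
  ring_nf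

theorem hasSum_poch_mul_pow_div_factorial (b : ℝ) {x : ℝ} (hx : |x| < 1) :
    HasSum (fun k => poch b k * x ^ k / k !) ((1 - x) ^ (-b)) := by
  have h := (Real.one_div_one_sub_rpow_hasFPowerSeriesOnBall_zero b).hasSum
    (y := x) (by simpa [enorm_eq_nnnorm, ← NNReal.coe_lt_coe] using hx)
  rw [FormalMultilinearSeries.ofScalars_apply_eq'] at h
  have h1 : 0 < 1 - x := by linarith [le_abs_self x]
  rw [zero_add, one_div, ← Real.rpow_neg h1.le] at h
  refine h.congr_fun fun k => ?_
  rw [choose_add_sub_one_eq_poch_div, smul_eq_mul, div_mul_eq_mul_div]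

/-- Chu–Vandermonde: Vandermonde's identity for `Ring.choose` at `-b` and `c + n - 1`. -/
theorem sum_poch_neg_mul_poch_div (n : ℕ) (b c : ℝ) (hc : poch c n ≠ 0) :
    ∑ i ∈ range (n + 1), poch (-n) i * poch b i / (poch c i * i !) =
      poch (c - b) n / poch c n := by
  have vdm := Ring.add_choose_eq n (Commute.all (-b) (c + n - 1))
  rw [Finset.Nat.sum_antidiagonal_eq_sum_range_succ
      (fun i l => Ring.choose (-b) i * Ring.choose (c + n - 1) l),
    show -b + (c + n - 1) = c - b + n - 1 by ring, choose_add_sub_one_eq_poch_div,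
    div_eq_iff (Nat.cast_ne_zero.2 n.factorial_ne_zero)] at vdm
  rw [vdm, Finset.sum_mul, Finset.sum_div]
  refine Finset.sum_congr rfl fun i hi => ?_
  have hin : i ≤ n := Nat.lt_succ_iff.mp (mem_range.mp hi)
  have hsplit : poch c n = poch c i * poch (c + i) (n - i) := by
    rw [← poch_add, Nat.add_sub_cancel' hin]
  have hci : c + n - 1 = (c + i) + (n - i : ℕ) - 1 := by push_cast [Nat.cast_sub hin]; ring
  obtain ⟨hc₁, hc₂⟩ := mul_ne_zero_iff.mp (hsplit ▸ hc)
  rw [choose_neg_eq_poch_div, hci, choose_add_sub_one_eq_poch_div, poch_neg_natCast, hsplit,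
    ← Nat.factorial_mul_descFactorial hin]
  push_cast
  field_simp

theorem hasSum_poch_mul_poch_neg_mul_poch (a : ℝ) {β : ℝ} (hβ : |β| < 1) (i j : ℕ) :
    HasSum (fun k : ℕ => poch a k * (β ^ k / k !) * poch (-k) i * poch (k + a) j)
      ((-β) ^ i * poch a (i + j) * (1 - β) ^ (-(a + i + j))) := by
  rw [← hasSum_nat_add_iff' i, Finset.sum_eq_zero fun k hk => by
    rw [poch_neg_natCast_of_lt (mem_range.mp hk), mul_zero, zero_mul], sub_zero]
  have hshift (t : ℕ) : poch a (t + i) * (β ^ (t + i) / (t + i) !) * poch (-(t + i : ℕ)) i *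
      poch ((t + i : ℕ) + a) j =
        (-β) ^ i * poch a (i + j) * (poch (a + i + j) t * β ^ t / t !) := by
    have hfact : ((t + i) ! : ℝ) = t ! * (t + i).descFactorial i := by
      have h := Nat.factorial_mul_descFactorial (Nat.le_add_left i t)
      rw [Nat.add_sub_cancel] at h
      exact_mod_cast h.symm
    have hpoch : poch a (t + i) * poch ((t + i : ℕ) + a) j =
        poch a (i + j) * poch (a + i + j) t := by
      rw [add_comm _ a, ← poch_add, show t + i + j = (i + j) + t by omega, poch_add,
        Nat.cast_add, add_assoc]
    have hdesc : ((t + i).descFactorial i : ℝ) ≠ 0 := by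
      exact_mod_cast (Nat.descFactorial_pos.mpr (Nat.le_add_left i t)).ne'
    rw [poch_neg_natCast, hfact]
    field_simp
    linear_combination (-1) ^ i * β ^ (t + i) * hpoch
  simpa only [hshift] using
    (hasSum_poch_mul_pow_div_factorial (a + i + j) hβ).mul_left ((-β) ^ i * poch a (i + j))

noncomputable def shiftedPochhammer (a : ℝ) (j : ℕ) : ℝ[X] :=
  (ascPochhammer ℝ j).comp (X + C a)

@[simp]
lemma eval_shiftedPochhammer (a x : ℝ) (j : ℕ) :
    (shiftedPochhammer a j).eval x = poch (x + a) j := by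
  simp [shiftedPochhammer, poch, eval_comp]

lemma monic_shiftedPochhammer (a : ℝ) (j : ℕ) : (shiftedPochhammer a j).Monic :=
  (monic_ascPochhammer ℝ j).comp (monic_X_add_C a) (by simp)

lemma natDegree_shiftedPochhammer (a : ℝ) (j : ℕ) : (shiftedPochhammer a j).natDegree = j := by
  simp [shiftedPochhammer, natDegree_comp, ascPochhammer_natDegree]

noncomputable def shiftedPochhammerSeq (a : ℝ) : Sequence ℝ where
  elems' := shiftedPochhammer a
  degree_eq' j := by
    rw [degree_eq_natDegree (monic_shiftedPochhammer a j).ne_zero, natDegree_shiftedPochhammer]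

def seriesAnnihilator (f : ℕ → ℝ) : Submodule ℝ ℝ[X] where
  carrier := {p | HasSum (fun k : ℕ => f k * p.eval (k : ℝ)) 0}
  add_mem' {p q} hp hq := by simpa [mul_add] using hp.add hq
  zero_mem' := by simp
  smul_mem' c p hp := by simpa [mul_left_comm] using hp.mul_left c

@[simp]
lemma mem_seriesAnnihilator {f : ℕ → ℝ} {p : ℝ[X]} :
    p ∈ seriesAnnihilator f ↔ HasSum (fun k : ℕ => f k * p.eval (k : ℝ)) 0 := Iff.rfl

lemma degreeLT_le_seriesAnnihilator (f : ℕ → ℝ) (a : ℝ) (n : ℕ)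
    (h : ∀ j < n, HasSum (fun k : ℕ => f k * poch (k + a) j) 0) :
    degreeLT ℝ n ≤ seriesAnnihilator f := by
  rw [← (shiftedPochhammerSeq a).span_degreeLT fun j _ =>
    (monic_shiftedPochhammer a j).leadingCoeff ▸ isUnit_one, Submodule.span_le]
  rintro _ ⟨j, hj, rfl⟩
  simpa [shiftedPochhammerSeq] using h j hj

noncomputable def meixnerPoly (a β : ℝ) (n : ℕ) : ℝ[X] :=
  ∑ i ∈ range (n + 1),
    (poch (-n) i / (poch a i * i !) * (1 - 1 / β) ^ i) • (ascPochhammer ℝ i).comp (-X)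

lemma eval_meixnerPoly (a β x : ℝ) (n : ℕ) : (meixnerPoly a β n).eval x =
    ∑ i ∈ range (n + 1), poch (-n) i / (poch a i * i !) * (1 - 1 / β) ^ i * poch (-x) i := by
  simp [meixnerPoly, eval_finsetSum, eval_comp, poch]

lemma meixner_eq_mul_eval (μ β : ℝ) (n k : ℕ) : meixner μ β n k =
    Real.sqrt (poch (2 * μ) n / n !) * Real.rpow β ((n : ℝ) / 2) *
      (meixnerPoly (2 * μ) β n).eval (k : ℝ) := by
  rw [meixner, eval_meixnerPoly]
  congr 1
  refine (Finset.sum_subset (Finset.range_subset_range.mpr (by omega)) fun i hi hik => ?_).trans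
    (Finset.sum_congr rfl fun i _ => by ring)
  rw [poch_neg_natCast_of_lt (k := k) (by simp at hi hik; omega)]
  ring

lemma natDegree_comp_neg_X {R : Type*} [CommRing R] [IsDomain R] (p : R[X]) :
    (p.comp (-X)).natDegree = p.natDegree := by
  simp [natDegree_comp]

lemma comp_neg_X_mem_degreeLT {i n : ℕ} (h : i < n) :
    (ascPochhammer ℝ i).comp (-X) ∈ degreeLT ℝ n := by
  rw [mem_degreeLT]
  refine degree_le_natDegree.trans_lt ?_
  rwa [natDegree_comp_neg_X, ascPochhammer_natDegree, Nat.cast_lt]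

lemma meixnerPoly_mem_degreeLT (a β : ℝ) {m n : ℕ} (h : m < n) :
    meixnerPoly a β m ∈ degreeLT ℝ n :=
  Submodule.sum_mem _ fun _ hi => Submodule.smul_mem _ _ <|
    comp_neg_X_mem_degreeLT ((Nat.lt_succ_iff.mp (mem_range.mp hi)).trans_lt h)

lemma comp_neg_X_sub_shiftedPochhammer_mem_degreeLT (a : ℝ) (n : ℕ) :
    (ascPochhammer ℝ n).comp (-X) - (-1 : ℝ) ^ n • shiftedPochhammer a n ∈ degreeLT ℝ n := by
  set p := (ascPochhammer ℝ n).comp (-X)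
  set q := (-1 : ℝ) ^ n • shiftedPochhammer a n
  have hp : p.natDegree = n := by rw [natDegree_comp_neg_X, ascPochhammer_natDegree]
  have hq : q.natDegree = n := by
    simp only [q]
    rw [smul_eq_C_mul, natDegree_C_mul (by simp), natDegree_shiftedPochhammer]
  have hlcp : p.leadingCoeff = (-1) ^ n := by
    simp [p, leadingCoeff_comp, (monic_ascPochhammer ℝ n).leadingCoeff, ascPochhammer_natDegree]
  have hlcq : q.leadingCoeff = (-1) ^ n := by
    simp only [q]
    rw [smul_eq_C_mul, leadingCoeff_mul, leadingCoeff_C,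
      (monic_shiftedPochhammer a n).leadingCoeff, mul_one]
  have hp0 : p ≠ 0 := leadingCoeff_ne_zero.mp (by simp [hlcp])
  have hq0 : q ≠ 0 := leadingCoeff_ne_zero.mp (by simp [hlcq])
  have hdeg : p.degree = n := by rw [degree_eq_natDegree hp0, hp]
  rw [mem_degreeLT, ← hdeg]
  exact degree_sub_lt_left (by rw [hdeg, degree_eq_natDegree hq0, hq]) hp0 (hlcp.trans hlcq.symm)

lemma meixnerPoly_sub_smul_shiftedPochhammer_mem_degreeLT (a β : ℝ) (n : ℕ) :
    meixnerPoly a β n - (poch (-n) n / (poch a n * n !) * (1 - 1 / β) ^ n * (-1) ^ n) •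
      shiftedPochhammer a n ∈ degreeLT ℝ n := by
  rw [meixnerPoly, Finset.sum_range_succ, add_sub_assoc, ← smul_smul _ ((-1 : ℝ) ^ n),
    ← smul_sub]
  exact add_mem (Submodule.sum_mem _ fun i hi => Submodule.smul_mem _ _ <|
    comp_neg_X_mem_degreeLT (mem_range.mp hi))
    (Submodule.smul_mem _ _ (comp_neg_X_sub_shiftedPochhammer_mem_degreeLT a n))

noncomputable def meixnerWeight (a β : ℝ) (k : ℕ) : ℝ :=
  Real.rpow (1 - β) a * poch a k * (β ^ k / k !)

theorem hasSum_meixnerWeight_mul_meixnerPoly_mul_poch {a β : ℝ} (ha : 0 < a) (hβ0 : 0 < β)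
    (hβ1 : β < 1) (n j : ℕ) :
    HasSum (fun k : ℕ => meixnerWeight a β k * (meixnerPoly a β n).eval (k : ℝ) * poch (k + a) j)
      (poch a j * poch (-j) n / (poch a n * (1 - β) ^ j)) := by
  have h1β : 0 < 1 - β := by linarith
  have hterm (k : ℕ) :
      meixnerWeight a β k * (meixnerPoly a β n).eval (k : ℝ) * poch (k + a) j =
        ∑ i ∈ range (n + 1),
          poch (-n) i / (poch a i * i !) * (1 - 1 / β) ^ i * Real.rpow (1 - β) a *
            (poch a k * (β ^ k / k !) * poch (-k) i * poch (k + a) j) := by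
    rw [meixnerWeight, eval_meixnerPoly, Finset.mul_sum, Finset.sum_mul]
    exact Finset.sum_congr rfl fun i _ => by ring
  have hvalue (i : ℕ) :
      poch (-n) i / (poch a i * i !) * (1 - 1 / β) ^ i * Real.rpow (1 - β) a *
        ((-β) ^ i * poch a (i + j) * (1 - β) ^ (-(a + i + j))) =
      poch a j / (1 - β) ^ j * (poch (-n) i * poch (a + j) i / (poch a i * i !)) := by
    have hrpow : Real.rpow (1 - β) a * (1 - β) ^ (-(a + i + j)) = ((1 - β) ^ (i + j))⁻¹ := by
      rw [← Real.rpow_natCast, ← Real.rpow_neg h1β.le, Real.rpow_eq_pow, ← Real.rpow_add h1β]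
      push_cast
      ring_nf
    have hc : (1 - 1 / β) * -β = 1 - β := by field_simp; ring
    calc _ = poch (-n) i / (poch a i * i !) * ((1 - 1 / β) * -β) ^ i * poch a (j + i) *
          (Real.rpow (1 - β) a * (1 - β) ^ (-(a + i + j))) := by
          rw [mul_pow, add_comm j i]; ring
      _ = _ := by
          rw [hrpow, hc, poch_add, pow_add]
          field_simp
  have hsum := hasSum_sum fun i (_ : i ∈ range (n + 1)) =>
    (hasSum_poch_mul_poch_neg_mul_poch a (abs_lt.mpr ⟨by linarith, hβ1⟩) i j).mul_left
      (poch (-n) i / (poch a i * i !) * (1 - 1 / β) ^ i * Real.rpow (1 - β) a)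
  rw [Finset.sum_congr rfl fun i _ => hvalue i, ← Finset.mul_sum,
    sum_poch_neg_mul_poch_div _ _ _ (poch_pos ha n).ne', sub_add_cancel_left] at hsum
  rw [show poch a j * poch (-j) n / (poch a n * (1 - β) ^ j) =
    poch a j / (1 - β) ^ j * (poch (-j) n / poch a n) by ring]
  exact hsum.congr_fun hterm

theorem degreeLT_le_seriesAnnihilator_meixnerPoly {a β : ℝ} (ha : 0 < a) (hβ0 : 0 < β)
    (hβ1 : β < 1) (n : ℕ) :
    degreeLT ℝ n ≤
      seriesAnnihilator fun k => meixnerWeight a β k * (meixnerPoly a β n).eval (k : ℝ) :=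
  degreeLT_le_seriesAnnihilator _ a n fun j hj => by
    simpa [poch_neg_natCast_of_lt hj] using
      hasSum_meixnerWeight_mul_meixnerPoly_mul_poch ha hβ0 hβ1 n j

theorem hasSum_meixnerWeight_mul_meixnerPoly_mul_meixnerPoly {a β : ℝ} (ha : 0 < a)
    (hβ0 : 0 < β) (hβ1 : β < 1) (n m : ℕ) :
    HasSum (fun k : ℕ => meixnerWeight a β k * (meixnerPoly a β n).eval (k : ℝ) *
      (meixnerPoly a β m).eval (k : ℝ)) (if n = m then n ! / (poch a n * β ^ n) else 0) := by
  have orth {n m : ℕ} (h : m < n) : HasSum (fun k : ℕ => meixnerWeight a β k *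
      (meixnerPoly a β n).eval (k : ℝ) * (meixnerPoly a β m).eval (k : ℝ)) 0 :=
    degreeLT_le_seriesAnnihilator_meixnerPoly ha hβ0 hβ1 n (meixnerPoly_mem_degreeLT a β h)
  rcases lt_trichotomy n m with h | rfl | h
  · simpa only [if_neg h.ne, mul_right_comm _ ((meixnerPoly a β n).eval _)] using orth h
  · set lc := poch (-n) n / (poch a n * n !) * (1 - 1 / β) ^ n * (-1) ^ n
    have hlead := (hasSum_meixnerWeight_mul_meixnerPoly_mul_poch ha hβ0 hβ1 n n).mul_left lc
    have hrest := mem_seriesAnnihilator.mp <|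
      degreeLT_le_seriesAnnihilator_meixnerPoly ha hβ0 hβ1 n
        (meixnerPoly_sub_smul_shiftedPochhammer_mem_degreeLT a β n)
    have hvalue : lc * (poch a n * poch (-n) n / (poch a n * (1 - β) ^ n)) + 0 =
        n ! / (poch a n * β ^ n) := by
      have hpa := (poch_pos ha n).ne'
      have h1β : 1 - β ≠ 0 := by linarith
      have hc : (1 - 1 / β) * -1 = (1 - β) / β := by field_simp; ring
      calc _ = ((-1) ^ n * (-1) ^ n) * ((1 - 1 / β) * -1) ^ n * n ! /
            (poch a n * (1 - β) ^ n) := by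
            simp only [lc, add_zero, poch_neg_natCast, Nat.descFactorial_self, mul_pow]
            generalize 1 - 1 / β = c
            field_simp
        _ = n ! / (poch a n * β ^ n) := by
            rw [← mul_pow, neg_one_mul, neg_neg, one_pow, one_mul, hc, div_pow]
            field_simp
    rw [if_pos rfl, ← hvalue]
    refine (hlead.add hrest).congr_fun fun k => ?_
    simp only [eval_sub, eval_smul, eval_shiftedPochhammer, smul_eq_mul]
    ring
  · simpa only [if_neg h.ne'] using orth h

lemma sqrt_mul_rpow_half_mul_self {p β : ℝ} (hp : 0 ≤ p) (hβ : 0 < β) (n : ℕ) :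
    Real.sqrt p * Real.rpow β ((n : ℝ) / 2) * (Real.sqrt p * Real.rpow β ((n : ℝ) / 2)) =
      p * β ^ n := by
  rw [mul_mul_mul_comm, Real.mul_self_sqrt hp, Real.rpow_eq_pow, ← Real.rpow_add hβ, add_halves,
    Real.rpow_natCast]

/-- **orthonormality of Meixner polynomials.** For `μ > 0`,
`0 < β < 1`, and all integers `n, m ≥ 0`, the series
`∑ₖ (1−β)^{2μ} (2μ)ₖ (βᵏ/k!) Mₙ^μ(k;β) Mₘ^μ(k;β)` converges absolutely and its
sum equals `δₙₘ`. -/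
theorem meixner_orthonormal (μ β : ℝ) (hμ : 0 < μ) (hβ0 : 0 < β) (hβ1 : β < 1)
    (n m : ℕ) :
    Summable (fun k : ℕ =>
      |Real.rpow (1 - β) (2 * μ) * poch (2 * μ) k * (β ^ k / (Nat.factorial k)) *
        meixner μ β n k * meixner μ β m k|) ∧
    ∑' k : ℕ, Real.rpow (1 - β) (2 * μ) * poch (2 * μ) k *
        (β ^ k / (Nat.factorial k)) * meixner μ β n k * meixner μ β m k =
      if n = m then (1 : ℝ) else 0 := by
  have hpoch := poch_pos (by positivity : 0 < 2 * μ) n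
  have hA := sqrt_mul_rpow_half_mul_self (div_nonneg hpoch.le (Nat.cast_nonneg n !)) hβ0 n
  set A : ℕ → ℝ := fun n => Real.sqrt (poch (2 * μ) n / n !) * Real.rpow β ((n : ℝ) / 2)
  have hsum : HasSum (fun k : ℕ => Real.rpow (1 - β) (2 * μ) * poch (2 * μ) k * (β ^ k / k !) *
      meixner μ β n k * meixner μ β m k) (if n = m then 1 else 0) := by
    rw [show (if n = m then 1 else 0) =
        A n * A m * (if n = m then n ! / (poch (2 * μ) n * β ^ n) else 0) by
      split_ifs with h
      · rw [← h, hA]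
        field_simp
      · rw [mul_zero]]
    refine ((hasSum_meixnerWeight_mul_meixnerPoly_mul_meixnerPoly (a := 2 * μ) (by positivity)
      hβ0 hβ1 n m).mul_left (A n * A m)).congr_fun fun k => ?_
    simp only [meixner_eq_mul_eval, meixnerWeight, A]
    ring
  exact ⟨hsum.summable.abs, hsum.tsum_eq⟩
end

section
/- (Closed form of a finite sum.) For every real r > 0 and every integer M ≥ 0, ∑_{k=0}^{M} (k+1) r^{k+1} / Γ(k + r + 2) = 1/Γ(r) − r^{M+2}/Γ(M + r + 2), where Γ denotes the real Gamma function. -/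
/-! Since `1/Γ(s) = s/Γ(s+1)`, the summand equals `f k - f (k+1)` with
`f k = r^(k+1)/Γ(k+r+1)`, so the sum telescopes to `f 0 - f (M+1)`, and `f 0 = r/Γ(r+1) = 1/Γ(r)`. -/

open Finset

namespace Real

/-- Unlike `Real.Gamma_add_one`, this form of the recurrence also holds at the poles, where both
sides vanish by the convention `0⁻¹ = 0`. -/
theorem inv_Gamma_eq_self_mul_inv_Gamma_add_one (s : ℝ) :
    (Gamma s)⁻¹ = s * (Gamma (s + 1))⁻¹ := by
  rcases ne_or_eq s 0 with hs | rfl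
  · rw [Gamma_add_one hs, mul_inv, mul_inv_cancel_left₀ hs]
  · rw [zero_add, Gamma_zero, inv_zero, zero_mul]

theorem pow_div_Gamma_sub_pow_succ_div_Gamma_add_one (x s : ℝ) (n : ℕ) :
    x ^ n / Gamma s - x ^ (n + 1) / Gamma (s + 1) = (s - x) * x ^ n / Gamma (s + 1) := by
  simp only [div_eq_mul_inv, inv_Gamma_eq_self_mul_inv_Gamma_add_one s]
  ring

end Real

theorem finite_sum_gamma_closed_form_general (r : ℝ) (M : ℕ) :
    ∑ k ∈ range (M + 1),
        ((k : ℝ) + 1) * r ^ (k + 1) / Real.Gamma ((k : ℝ) + r + 2) =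
      1 / Real.Gamma r - r ^ (M + 2) / Real.Gamma ((M : ℝ) + r + 2) := by
  set f : ℕ → ℝ := fun k ↦ r ^ (k + 1) / Real.Gamma ((k : ℝ) + r + 1)
  have telescope (k : ℕ) :
      ((k : ℝ) + 1) * r ^ (k + 1) / Real.Gamma ((k : ℝ) + r + 2) = f k - f (k + 1) := by
    have h := Real.pow_div_Gamma_sub_pow_succ_div_Gamma_add_one r ((k : ℝ) + r + 1) (k + 1)
    rw [show (k : ℝ) + r + 1 - r = k + 1 by ring, show (k : ℝ) + r + 1 + 1 = k + r + 2 by ring] at h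
    rw [← h]
    simp only [f]
    push_cast
    ring_nf
  rw [sum_congr rfl fun k _ ↦ telescope k, sum_range_sub']
  simp only [f]
  push_cast
  rw [one_div, Real.inv_Gamma_eq_self_mul_inv_Gamma_add_one r]
  ring_nf

/-- **closed form of a finite sum.** For every real `r > 0` and
every integer `M ≥ 0`,
`∑_{k=0}^{M} (k+1) r^{k+1} / Γ(k+r+2) = 1/Γ(r) − r^{M+2}/Γ(M+r+2)`. -/
theorem finite_sum_gamma_closed_form (r : ℝ) (hr : 0 < r) (M : ℕ) :
    ∑ k ∈ range (M + 1),
        ((k : ℝ) + 1) * r ^ (k + 1) / Real.Gamma ((k : ℝ) + r + 2) =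
      1 / Real.Gamma r - r ^ (M + 2) / Real.Gamma ((M : ℝ) + r + 2) :=
  finite_sum_gamma_closed_form_general r M
end
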